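/- arXiv:1801.07667 — 3 statements merged into one kernel-verified Lean document; each statement's English description precedes it below -/
import Mathlib

section
/- Let k ≥ 1 and let λ, μ, ν be partitions with at most k parts such that λ ⊆ ν. Then the number of semistandard set-valued tableaux T of shape ν with content (λ₁, …, λ_k, μ₁, …, μ_k) such that both restricted words row(T)|_[1,k] and row(T)|_[k+1,2k] are ballot equals the number of pairs (λ⁻, S) where λ⁻ is a partition obtained from λ by removing a (possibly empty) set of inner corners and S is a semistandard ballot set-valued tableau of shape ν/λ⁻ with content μ. -/
open Set

/-- `f` encodes a partition: a weakly decreasing, eventually zero sequence of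
nonnegative integers; `f i` is the (0-indexed) `i`-th part. -/
def IsPartition (f : ℕ → ℕ) : Prop :=
  (∀ i j, i ≤ j → f j ≤ f i) ∧ ∃ N, ∀ i, N ≤ i → f i = 0

/-- The Young diagram of `f`, as a set of (row, column) boxes, both 0-indexed. -/
def cells (f : ℕ → ℕ) : Set (ℕ × ℕ) := {p | p.2 < f p.1}

/-- The skew diagram ν/λ. -/
def skewCells (lam nu : ℕ → ℕ) : Set (ℕ × ℕ) := {p | lam p.1 ≤ p.2 ∧ p.2 < nu p.1}

/-- `lam'` is obtained from `lam` by removing a (possibly empty) set of inner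
corners of `lam`: in each row either nothing happens, or the last box of the
row is removed and that box is an inner corner of `lam`. -/
def RemoveInnerCorners (lam lam' : ℕ → ℕ) : Prop :=
  ∀ i, lam' i = lam i ∨ (lam' i + 1 = lam i ∧ lam (i + 1) < lam i)

/-- `mu'` is obtained from `mu` by adding a (possibly empty) set of outer
corners of `mu`. -/
def AddOuterCorners (mu mu' : ℕ → ℕ) : Prop :=
  ∀ i, mu' i = mu i ∨ (mu' i = mu i + 1 ∧ (i = 0 ∨ mu i < mu (i - 1)))

/-- The number of rows of the diagram of `f` (for a partition: the number of
nonzero parts). -/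
noncomputable def numParts (f : ℕ → ℕ) : ℕ := sInf {N | ∀ i, N ≤ i → f i = 0}

/-- The conjugate (transpose) partition. -/
noncomputable def conjPart (f : ℕ → ℕ) : ℕ → ℕ := fun j => {i | j < f i}.ncard

/-- The shape μ⊕λ : the diagram of λ shifted `μ 0` columns to the right
(occupying the top rows), with the diagram of μ below it (starting in row
`numParts λ`), to the lower left. -/
noncomputable def oplusShape (mu lam : ℕ → ℕ) : Set (ℕ × ℕ) :=
  {p | (mu 0 ≤ p.2 ∧ p.2 < mu 0 + lam p.1) ∨
       (numParts lam ≤ p.1 ∧ p.2 < mu (p.1 - numParts lam))}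

/-- A set-valued filling of shape `D`: every box of `D` carries a nonempty
finite set of positive integers, and boxes off `D` carry `∅`. -/
def IsSVT (D : Set (ℕ × ℕ)) (T : ℕ × ℕ → Finset ℕ) : Prop :=
  (∀ p ∈ D, (T p).Nonempty ∧ ∀ v ∈ T p, 1 ≤ v) ∧ ∀ p, p ∉ D → T p = ∅

/-- Semistandardness for set-valued tableaux: weakly increasing along rows
(max of a box ≤ min of the box to its right), strictly increasing down
columns. -/
def IsSemistandardSVT (D : Set (ℕ × ℕ)) (T : ℕ × ℕ → Finset ℕ) : Prop :=
  (∀ r c, (r, c) ∈ D → (r, c + 1) ∈ D → ∀ a ∈ T (r, c), ∀ b ∈ T (r, c + 1), a ≤ b) ∧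
  (∀ r c, (r, c) ∈ D → (r + 1, c) ∈ D → ∀ a ∈ T (r, c), ∀ b ∈ T (r + 1, c), a < b)

/-- `readLE o o'` : the occurrence `o = ((row, col), value)` comes weakly
before `o'` in the reverse row word: rows top to bottom, within a row right to
left, within a box values largest to smallest. -/
def readLE (o o' : (ℕ × ℕ) × ℕ) : Prop :=
  o.1.1 < o'.1.1 ∨
    (o.1.1 = o'.1.1 ∧ (o'.1.2 < o.1.2 ∨ (o.1.2 = o'.1.2 ∧ o'.2 ≤ o.2)))

/-- The set of occurrences (letters of the reverse row word) of a set-valued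
tableau: pairs (box, value in that box). -/
def svtOcc (D : Set (ℕ × ℕ)) (T : ℕ × ℕ → Finset ℕ) : Set ((ℕ × ℕ) × ℕ) :=
  {o | o.1 ∈ D ∧ o.2 ∈ T o.1}

/-- Number of occurrences of the value `v` in the initial segment of the
reverse row word ending at the occurrence `o` (inclusive). -/
noncomputable def svtCount (D : Set (ℕ × ℕ)) (T : ℕ × ℕ → Finset ℕ)
    (o : (ℕ × ℕ) × ℕ) (v : ℕ) : ℕ :=
  {q ∈ svtOcc D T | readLE q o ∧ q.2 = v}.ncard

/-- The reverse row word of the set-valued tableau is ballot: in every initial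
segment, each `v ≥ 1` occurs at least as often as `v + 1`. -/
def svtBallot (D : Set (ℕ × ℕ)) (T : ℕ × ℕ → Finset ℕ) : Prop :=
  ∀ o ∈ svtOcc D T, ∀ v, 1 ≤ v → svtCount D T o (v + 1) ≤ svtCount D T o v

/-- The restriction `row(T)|_[a,b]` of the reverse row word to the letters in
the interval `[a,b]` (shifted down to `[1, b-a+1]`) is ballot.  Equivalently:
in every initial segment, each `v` with `a ≤ v` and `v + 1 ≤ b` occurs at
least as often as `v + 1`. -/
def svtBallotRange (D : Set (ℕ × ℕ)) (T : ℕ × ℕ → Finset ℕ) (a b : ℕ) : Prop :=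
  ∀ o ∈ svtOcc D T, ∀ v, a ≤ v → v + 1 ≤ b →
    svtCount D T o (v + 1) ≤ svtCount D T o v

/-- The content of the set-valued tableau is `mu`: for every `v`, the value
`v + 1` occurs exactly `mu v` times (i.e. m_i = μ_i, 1-indexed). -/
def svtContentEq (D : Set (ℕ × ℕ)) (T : ℕ × ℕ → Finset ℕ) (mu : ℕ → ℕ) : Prop :=
  ∀ v : ℕ, {o ∈ svtOcc D T | o.2 = v + 1}.ncard = mu v

/-- A circle tableau of shape `D`: each box of `D` carries a single entry, a
positive integer together with a circling flag; boxes off `D` carry `(0, false)`. -/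
def IsCircleTab (D : Set (ℕ × ℕ)) (T : ℕ × ℕ → ℕ × Bool) : Prop :=
  (∀ p ∈ D, 1 ≤ (T p).1) ∧ ∀ p, p ∉ D → T p = (0, false)

/-- Semistandardness for circle tableaux (ignoring circles): rows weakly
increase left to right, columns strictly increase top to bottom. -/
def IsSemistandardCT (D : Set (ℕ × ℕ)) (T : ℕ × ℕ → ℕ × Bool) : Prop :=
  (∀ r c, (r, c) ∈ D → (r, c + 1) ∈ D → (T (r, c)).1 ≤ (T (r, c + 1)).1) ∧
  (∀ r c, (r, c) ∈ D → (r + 1, c) ∈ D → (T (r, c)).1 < (T (r + 1, c)).1)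

/-- Right circle condition: a circled entry is the rightmost entry of its row
with its value (ignoring circles). -/
def IsRightCT (D : Set (ℕ × ℕ)) (T : ℕ × ℕ → ℕ × Bool) : Prop :=
  ∀ r c, (r, c) ∈ D → (T (r, c)).2 = true →
    ∀ c', c < c' → (r, c') ∈ D → (T (r, c')).1 ≠ (T (r, c)).1

/-- Left circle condition: a circled entry is the leftmost entry of its row
with its value (ignoring circles). -/
def IsLeftCT (D : Set (ℕ × ℕ)) (T : ℕ × ℕ → ℕ × Bool) : Prop :=
  ∀ r c, (r, c) ∈ D → (T (r, c)).2 = true →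
    ∀ c', c' < c → (r, c') ∈ D → (T (r, c')).1 ≠ (T (r, c)).1

/-- `cellLE p q` : box `p` comes weakly before box `q` in the reverse row
reading order (rows top to bottom, within a row right to left). -/
def cellLE (p q : ℕ × ℕ) : Prop := p.1 < q.1 ∨ (p.1 = q.1 ∧ q.2 ≤ p.2)

/-- Number of uncircled occurrences of the value `v` among the boxes weakly
before `q` in reading order. -/
noncomputable def ctCount (D : Set (ℕ × ℕ)) (T : ℕ × ℕ → ℕ × Bool)
    (q : ℕ × ℕ) (v : ℕ) : ℕ :=
  {p ∈ D | cellLE p q ∧ T p = (v, false)}.ncard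

/-- Ballotness for right circle tableaux: for every initial segment of the
reverse row word, its incremented erasure (the final entry, if circled ⓘ, is
replaced by an uncircled `i+1`; all other circled entries are deleted) is a
ballot word. -/
def ctBallotInc (D : Set (ℕ × ℕ)) (T : ℕ × ℕ → ℕ × Bool) : Prop :=
  ∀ q ∈ D, ∀ v, 1 ≤ v →
    ctCount D T q (v + 1) + (if T q = (v, true) then 1 else 0) ≤
      ctCount D T q v + (if T q = (v - 1, true) then 1 else 0)

/-- Ballotness for left circle tableaux: for every initial segment of the
reverse row word, its unincremented erasure (the final entry, if circled ⓘ, is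
replaced by an uncircled `i`; all other circled entries are deleted) is a
ballot word. -/
def ctBallotUninc (D : Set (ℕ × ℕ)) (T : ℕ × ℕ → ℕ × Bool) : Prop :=
  ∀ q ∈ D, ∀ v, 1 ≤ v →
    ctCount D T q (v + 1) + (if T q = (v + 1, true) then 1 else 0) ≤
      ctCount D T q v + (if T q = (v, true) then 1 else 0)

/-- The content of the circle tableau is `nu` (circled entries omitted). -/
def ctContentEq (D : Set (ℕ × ℕ)) (T : ℕ × ℕ → ℕ × Bool) (nu : ℕ → ℕ) : Prop :=
  ∀ v : ℕ, {p ∈ D | T p = (v + 1, false)}.ncard = nu v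

/-- In a circle tableau of shape μ⊕λ, circled entries occur only in the
lower-left part μ (the rows from row `numParts λ` on). -/
def CirclesInLower (lam : ℕ → ℕ) (T : ℕ × ℕ → ℕ × Bool) : Prop :=
  ∀ p : ℕ × ℕ, (T p).2 = true → numParts lam ≤ p.1

/-- A circle tableau of shape μ⊕λ is limited: it has no circled ⓘ in row `i`
(1-indexed) of the lower-left part μ. -/
def IsLimitedCT (lam : ℕ → ℕ) (T : ℕ × ℕ → ℕ × Bool) : Prop :=
  ∀ r c : ℕ, (T (numParts lam + r, c)).2 = true →
    (T (numParts lam + r, c)).1 ≠ r + 1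

section BVS

noncomputable def bvsLamMinus (k : ℕ) (lam : ℕ → ℕ) (T : ℕ × ℕ → Finset ℕ) : ℕ → ℕ :=
  fun r => if ∃ v ∈ T (r, lam r - 1), k < v then lam r - 1 else lam r

def bvsS (k : ℕ) (T : ℕ × ℕ → Finset ℕ) : ℕ × ℕ → Finset ℕ :=
  fun p => ((T p).filter (fun v => k < v)).image (fun v => v - k)

def bvsRebuild (k : ℕ) (lam : ℕ → ℕ) (S : ℕ × ℕ → Finset ℕ) : ℕ × ℕ → Finset ℕ :=
  fun p => (if p.2 < lam p.1 then {p.1 + 1} else ∅) ∪ (S p).image (fun v => v + k)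

lemma readLE_refl (o : (ℕ × ℕ) × ℕ) : readLE o o := by
  simp [readLE]

lemma readLE_trans {a b c : (ℕ × ℕ) × ℕ} (h1 : readLE a b) (h2 : readLE b c) :
    readLE a c := by
  unfold readLE at *
  omega

lemma readLE_total (a b : (ℕ × ℕ) × ℕ) : readLE a b ∨ readLE b a := by
  unfold readLE; omega

lemma cells_finite {nu : ℕ → ℕ} {k : ℕ} (hnuk : ∀ i, k ≤ i → nu i = 0)
    (hnu : IsPartition nu) : (cells nu).Finite := by
  apply Set.Finite.subset ((Set.finite_Iio k).prod (Set.finite_Iio (nu 0)))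
  rintro ⟨r, c⟩ hc
  simp only [cells, Set.mem_setOf_eq] at hc
  constructor
  · simp only [Set.mem_Iio]
    by_contra h
    rw [hnuk r (by omega)] at hc; omega
  · simp only [Set.mem_Iio]
    exact lt_of_lt_of_le hc (hnu.1 0 r (Nat.zero_le r))

lemma svtOcc_finite {D : Set (ℕ × ℕ)} {T : ℕ × ℕ → Finset ℕ} (hD : D.Finite) :
    (svtOcc D T).Finite := by
  apply Set.Finite.subset (Set.Finite.biUnion hD
    (fun p _ => ((Set.finite_singleton p).prod (T p).finite_toSet)))
  rintro ⟨p, v⟩ ⟨hp, hv⟩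
  exact Set.mem_biUnion hp ⟨rfl, hv⟩

lemma svtCount_set_subset {D : Set (ℕ × ℕ)} {T : ℕ × ℕ → Finset ℕ}
    (o : (ℕ × ℕ) × ℕ) (v : ℕ) :
    {q ∈ svtOcc D T | readLE q o ∧ q.2 = v} ⊆ svtOcc D T := fun q hq => hq.1

/-- downward closed finite set of naturals is an initial segment -/
lemma dc_eq_Iio {C : Set ℕ} (hC : C.Finite) (hdc : ∀ c ∈ C, ∀ c' ≤ c, c' ∈ C) :
    C = Set.Iio C.ncard := by
  ext x
  simp only [Set.mem_Iio]
  constructor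
  · intro hx
    have h1 : Set.Iic x ⊆ C := fun y hy => hdc x hx y hy
    have h2 : (Set.Iic x).ncard ≤ C.ncard := Set.ncard_le_ncard h1 hC
    have h3 : (Set.Iic x).ncard = x + 1 := by
      have he : (Set.Iic x) = ↑(Finset.Iic x) := by ext y; simp
      rw [he, Set.ncard_coe_finset, Nat.card_Iic]
    omega
  · intro hx
    by_contra hxc
    have h1 : C ⊆ Set.Iio x := by
      intro y hy
      simp only [Set.mem_Iio]
      by_contra h
      exact hxc (hdc y hy x (by omega))
    have h2 : C.ncard ≤ (Set.Iio x).ncard := Set.ncard_le_ncard h1 (Set.finite_Iio x)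
    have h3 : (Set.Iio x).ncard = x := by
      have he : (Set.Iio x) = ↑(Finset.Iio x) := by ext y; simp
      rw [he, Set.ncard_coe_finset, Nat.card_Iio]
    omega

lemma exists_readLE_max {A : Set ((ℕ × ℕ) × ℕ)} (hA : A.Finite) (hne : A.Nonempty) :
    ∃ m ∈ A, ∀ q ∈ A, readLE q m := by
  revert hne
  refine Set.Finite.induction_on
    (motive := fun A _ => A.Nonempty → ∃ m ∈ A, ∀ q ∈ A, readLE q m) A hA (by simp) ?_
  intro a s _ _ ih _
  rcases s.eq_empty_or_nonempty with rfl | hsne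
  · refine ⟨a, Set.mem_insert a _, ?_⟩
    rintro q hq
    rcases Set.mem_insert_iff.mp hq with rfl | hq
    · exact readLE_refl q
    · simp at hq
  · obtain ⟨m, hm, hmax⟩ := ih hsne
    rcases readLE_total a m with h | h
    · refine ⟨m, Set.mem_insert_of_mem _ hm, ?_⟩
      rintro q hq; rcases Set.mem_insert_iff.mp hq with rfl | hq
      · exact h
      · exact hmax q hq
    · refine ⟨a, Set.mem_insert a _, ?_⟩
      rintro q hq; rcases Set.mem_insert_iff.mp hq with rfl | hq
      · exact readLE_refl q
      · exact readLE_trans (hmax q hq) h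

end BVS
section BVS2

structure BvsFrozen (k : ℕ) (lam : ℕ → ℕ) (T : ℕ × ℕ → Finset ℕ) : Prop where
  low_mem : ∀ r c, c < lam r → (r + 1) ∈ T (r, c)
  low_loc : ∀ r c v, v ∈ T (r, c) → v ≤ k → v = r + 1 ∧ c < lam r
  pure : ∀ r c, c + 1 < lam r → T (r, c) = {r + 1}
  corner : ∀ r, 0 < lam r → (∃ v ∈ T (r, lam r - 1), k < v) → lam (r + 1) < lam r

lemma mem_cells_of_mem {D : Set (ℕ × ℕ)} {T : ℕ × ℕ → Finset ℕ}
    (hsvt : IsSVT D T) {p : ℕ × ℕ} {v : ℕ} (hv : v ∈ T p) : p ∈ D := by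
  by_contra h
  rw [hsvt.2 p h] at hv
  simp at hv

lemma one_le_of_mem {D : Set (ℕ × ℕ)} {T : ℕ × ℕ → Finset ℕ}
    (hsvt : IsSVT D T) {p : ℕ × ℕ} {v : ℕ} (hv : v ∈ T p) : 1 ≤ v :=
  (hsvt.1 p (mem_cells_of_mem hsvt hv)).2 v hv

lemma cells_mono {nu : ℕ → ℕ} {r c c' : ℕ} (h : (r, c) ∈ cells nu) (hc : c' ≤ c) :
    (r, c') ∈ cells nu := lt_of_le_of_lt hc h

lemma row_le {nu : ℕ → ℕ} {T : ℕ × ℕ → Finset ℕ}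
    (hsvt : IsSVT (cells nu) T) (hss : IsSemistandardSVT (cells nu) T) :
    ∀ c c' r, c' < c → (r, c) ∈ cells nu → ∀ a ∈ T (r, c'), ∀ b ∈ T (r, c), a ≤ b := by
  intro c
  induction c using Nat.strong_induction_on with
  | _ c ih =>
    intro c' r hlt hcell a ha b hb
    rcases Nat.lt_or_ge c' (c - 1) with h | h
    · have hc1 : (r, c - 1) ∈ cells nu := cells_mono hcell (by omega)
      obtain ⟨m, hm⟩ := (hsvt.1 _ hc1).1
      have h1 : a ≤ m := ih (c - 1) (by omega) c' r h hc1 a ha m hm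
      have h2 : m ≤ b := by
        have := hss.1 r (c - 1) hc1 (by rw [show c - 1 + 1 = c by omega]; exact hcell)
        rw [show c - 1 + 1 = c by omega] at this
        exact this m hm b hb
      omega
    · have hc' : c' = c - 1 := by omega
      subst hc'
      have := hss.1 r (c - 1) (cells_mono hcell (by omega))
        (by rw [show c - 1 + 1 = c by omega]; exact hcell)
      rw [show c - 1 + 1 = c by omega] at this
      exact this a ha b hb

lemma bvs_frozen {k : ℕ} {lam nu mu' : ℕ → ℕ} {T : ℕ × ℕ → Finset ℕ}
    (hlamp : ∀ i j, i ≤ j → lam j ≤ lam i)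
    (hnu : IsPartition nu) (hlamk : ∀ i, k ≤ i → lam i = 0)
    (hnuk : ∀ i, k ≤ i → nu i = 0)
    (hsvt : IsSVT (cells nu) T) (hss : IsSemistandardSVT (cells nu) T)
    (hcont : svtContentEq (cells nu) T
      (fun v => if v < k then lam v else if v < 2 * k then mu' (v - k) else 0))
    (hbal1 : svtBallotRange (cells nu) T 1 k) :
    BvsFrozen k lam T := by
  have hOccFin : (svtOcc (cells nu) T).Finite := svtOcc_finite (cells_finite hnuk hnu)
  have main : ∀ v, 1 ≤ v → v ≤ k →
      (∀ p : ℕ × ℕ, v ∈ T p → p.1 = v - 1) ∧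
      ({c | v ∈ T (v - 1, c)} = Set.Iio (lam (v - 1))) := by
    intro v
    induction v using Nat.strong_induction_on with
    | _ v ih =>
      intro hv1 hvk
      have stepA : ∀ p : ℕ × ℕ, v ∈ T p → p.1 = v - 1 := by
        rintro ⟨r, c⟩ hvp
        have hcell : (r, c) ∈ cells nu := mem_cells_of_mem hsvt hvp
        have hrle : r ≤ v - 1 := by
          rcases Nat.eq_zero_or_pos r with h0 | h1
          · omega
          · have hc' : (r - 1, c) ∈ cells nu :=
              lt_of_lt_of_le hcell (hnu.1 (r - 1) r (by omega))
            obtain ⟨w, hw⟩ := (hsvt.1 _ hc').1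
            have hcol := hss.2 (r - 1) c hc'
              (by rw [show r - 1 + 1 = r by omega]; exact hcell)
            rw [show r - 1 + 1 = r by omega] at hcol
            have hwv : w < v := hcol w hw v hvp
            have hw1 : 1 ≤ w := one_le_of_mem hsvt hw
            have hwr := (ih w hwv hw1 (by omega)).1 (r - 1, c) hw
            simp only at hwr
            omega
        simp only
        by_contra hne
        have hrlt : r < v - 1 := by omega
        have hv2 : 2 ≤ v := by omega
        obtain ⟨hP', hQ'⟩ := ih (v - 1) (by omega) (by omega) (by omega)
        have hkey : r = v - 2 → lam (v - 1 - 1) ≤ c + 1 := by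
          intro hr2
          by_contra hcs
          push_neg at hcs
          have hmem : v - 1 ∈ T (v - 1 - 1, c + 1) := by
            have : (c + 1) ∈ {c | v - 1 ∈ T (v - 1 - 1, c)} := by
              rw [hQ']; exact hcs
            exact this
          rw [show v - 1 - 1 = r by omega] at hmem
          have hcell2 : (r, c + 1) ∈ cells nu := mem_cells_of_mem hsvt hmem
          have := hss.1 r c hcell hcell2 v hvp (v - 1) hmem
          omega
        have ho : ((r, c), v) ∈ svtOcc (cells nu) T := ⟨hcell, hvp⟩
        have hb := hbal1 ((r, c), v) ho (v - 1) (by omega) (by omega)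
        rw [show v - 1 + 1 = v by omega] at hb
        have hpos : 1 ≤ svtCount (cells nu) T ((r, c), v) v := by
          simp only [svtCount]
          have hmem : ((r, c), v) ∈
              {q ∈ svtOcc (cells nu) T | readLE q ((r, c), v) ∧ q.2 = v} :=
            ⟨ho, readLE_refl _, rfl⟩
          have hfin : {q ∈ svtOcc (cells nu) T | readLE q ((r, c), v) ∧ q.2 = v}.Finite :=
            hOccFin.subset (svtCount_set_subset _ v)
          have := (Set.ncard_pos hfin).mpr ⟨_, hmem⟩
          omega
        have hzero : svtCount (cells nu) T ((r, c), v) (v - 1) = 0 := by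
          simp only [svtCount]
          rw [Set.ncard_eq_zero
            (hOccFin.subset (svtCount_set_subset _ (v - 1)))]
          ext q
          simp only [Set.mem_setOf_eq, Set.mem_empty_iff_false, iff_false, not_and]
          rintro hq hrd hval
          have hq2 : v - 1 ∈ T q.1 := hval ▸ hq.2
          have hrow : q.1.1 = v - 1 - 1 := hP' q.1 hq2
          have hcol : q.1.2 < lam (v - 1 - 1) := by
            have hmem : q.1.2 ∈ {c | v - 1 ∈ T (v - 1 - 1, c)} := by
              simp only [Set.mem_setOf_eq, ← hrow, Prod.mk.eta]
              exact hq2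
            rw [hQ'] at hmem
            exact hmem
          simp only [readLE] at hrd
          rcases hrd with h | ⟨heq, h⟩
          · omega
          · have := hkey (by omega)
            rcases h with h | ⟨h1, h2⟩
            · omega
            · omega
        omega
      refine ⟨stepA, ?_⟩
      have hCsub : {c | v ∈ T (v - 1, c)} ⊆ Set.Iio (nu (v - 1)) := by
        intro c hc
        exact mem_cells_of_mem hsvt hc
      have hCfin : {c | v ∈ T (v - 1, c)}.Finite := (Set.finite_Iio _).subset hCsub
      have hdc : ∀ c ∈ {c | v ∈ T (v - 1, c)}, ∀ c' ≤ c, c' ∈ {c | v ∈ T (v - 1, c)} := by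
        intro c hc c' hc'
        rcases Nat.lt_or_ge c' c with hlt | hge
        · have hcell : ((v - 1 : ℕ), c) ∈ cells nu := mem_cells_of_mem hsvt hc
          have hcell' : ((v - 1 : ℕ), c') ∈ cells nu := cells_mono hcell (by omega)
          obtain ⟨w, hw⟩ := (hsvt.1 _ hcell').1
          have hwle : w ≤ v := row_le hsvt hss c c' (v - 1) hlt hcell w hw v hc
          have hw1 : 1 ≤ w := one_le_of_mem hsvt hw
          rcases Nat.lt_or_ge w v with hwlt | hwge
          · exfalso
            have := (ih w hwlt hw1 (by omega)).1 (v - 1, c') hw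
            simp only at this
            omega
          · have hwv : w = v := by omega
            subst hwv
            exact hw
        · have : c' = c := by omega
          subst this; exact hc
      have himg : {o ∈ svtOcc (cells nu) T | o.2 = v} =
          (fun c => (((v - 1 : ℕ), c), v)) '' {c | v ∈ T (v - 1, c)} := by
        ext o
        obtain ⟨⟨r0, c0⟩, v0⟩ := o
        simp only [Set.mem_setOf_eq, Set.mem_image]
        constructor
        · rintro ⟨⟨hcell, hval⟩, hv0⟩
          have hval' : v ∈ T (r0, c0) := hv0 ▸ hval
          have hrow : r0 = v - 1 := stepA (r0, c0) hval'
          refine ⟨c0, ?_, ?_⟩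
          · rw [← hrow]; exact hval'
          · rw [hrow, hv0]
        · rintro ⟨c, hc, heq⟩
          injection heq with h1 h2
          injection h1 with h3 h4
          subst h2 h3 h4
          exact ⟨⟨mem_cells_of_mem hsvt hc, hc⟩, rfl⟩
      have hinj : Function.Injective (fun c : ℕ => (((v - 1 : ℕ), c), v)) := by
        intro a b h
        simpa using h
      have hcard : {c | v ∈ T (v - 1, c)}.ncard = lam (v - 1) := by
        have h1 := hcont (v - 1)
        rw [show v - 1 + 1 = v by omega] at h1
        rw [himg, Set.ncard_image_of_injective _ hinj] at h1
        rw [h1]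
        simp only [show v - 1 < k by omega, if_pos]
      rw [← hcard]
      exact dc_eq_Iio hCfin hdc
  have hlowloc : ∀ r c v, v ∈ T (r, c) → v ≤ k → v = r + 1 ∧ c < lam r := by
    intro r c v hv hvk
    have hv1 : 1 ≤ v := one_le_of_mem hsvt hv
    obtain ⟨hP, hQ⟩ := main v hv1 hvk
    have hrow : r = v - 1 := hP (r, c) hv
    have hc : c ∈ {c | v ∈ T (v - 1, c)} := by rw [← hrow]; exact hv
    rw [hQ] at hc
    simp only [Set.mem_Iio] at hc
    constructor
    · omega
    · rw [show r = v - 1 from hrow]; exact hc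
  have hlowmem : ∀ r c, c < lam r → (r + 1) ∈ T (r, c) := by
    intro r c hc
    have hrk : r < k := by
      by_contra h
      rw [hlamk r (by omega)] at hc; omega
    obtain ⟨hP, hQ⟩ := main (r + 1) (by omega) (by omega)
    have hmem : c ∈ Set.Iio (lam (r + 1 - 1)) := by simpa using hc
    rw [← hQ] at hmem
    simpa using hmem
  refine ⟨hlowmem, hlowloc, ?_, ?_⟩
  · intro r c hc
    have h1 : (r + 1) ∈ T (r, c) := hlowmem r c (by omega)
    have h2 : (r + 1) ∈ T (r, c + 1) := hlowmem r (c + 1) hc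
    have hcell1 : (r, c) ∈ cells nu := mem_cells_of_mem hsvt h1
    have hcell2 : (r, c + 1) ∈ cells nu := mem_cells_of_mem hsvt h2
    have hrk : r < k := by
      by_contra h
      rw [hlamk r (by omega)] at hc; omega
    ext x
    simp only [Finset.mem_singleton]
    constructor
    · intro hx
      have hle : x ≤ r + 1 := hss.1 r c hcell1 hcell2 x hx (r + 1) h2
      have := hlowloc r c x hx (by omega)
      omega
    · rintro rfl; exact h1
  · rintro r hr ⟨v, hv, hvk⟩
    by_contra hcon
    push_neg at hcon
    have heq : lam (r + 1) = lam r := by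
      have := hlamp r (r + 1) (by omega)
      omega
    have hr1k : r + 1 < k := by
      by_contra h
      have := hlamk (r + 1) (by omega)
      omega
    have h2 : (r + 2) ∈ T (r + 1, lam r - 1) := hlowmem (r + 1) (lam r - 1) (by omega)
    have hcell1 : (r, lam r - 1) ∈ cells nu := mem_cells_of_mem hsvt hv
    have hcell2 : (r + 1, lam r - 1) ∈ cells nu := mem_cells_of_mem hsvt h2
    have := hss.2 r (lam r - 1) hcell1 hcell2 v hv (r + 2) h2
    omega

end BVS2
section BVS3

lemma up_inj (k : ℕ) : Function.Injective (fun q : (ℕ × ℕ) × ℕ => (q.1, q.2 + k)) := by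
  rintro ⟨p, v⟩ ⟨p', v'⟩ h
  simp only [Prod.mk.injEq] at h
  obtain ⟨h1, h2⟩ := h
  simp [h1]; omega

lemma readLE_shift {p b : ℕ × ℕ} {w u k : ℕ} :
    readLE (p, w) (b, u - k) ↔ readLE (p, w + k) (b, u) := by
  simp only [readLE]
  omega

lemma shift_set_eq {D D' : Set (ℕ × ℕ)} {T S : ℕ × ℕ → Finset ℕ} {k : ℕ}
    (hcorr : ∀ p v, 1 ≤ v → ((p ∈ D' ∧ v ∈ S p) ↔ (p ∈ D ∧ v + k ∈ T p)))
    (o : (ℕ × ℕ) × ℕ) (w : ℕ) (hw : 1 ≤ w) :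
    (fun q : (ℕ × ℕ) × ℕ => (q.1, q.2 + k)) ''
      {q ∈ svtOcc D' S | readLE q (o.1, o.2 - k) ∧ q.2 = w}
      = {q ∈ svtOcc D T | readLE q o ∧ q.2 = w + k} := by
  ext q
  simp only [Set.mem_image, Set.mem_setOf_eq]
  constructor
  · rintro ⟨⟨p, v⟩, ⟨⟨hp, hv⟩, hrd, hval⟩, hup⟩
    dsimp only at hval hrd hp hv hup
    subst hval
    subst hup
    have hc := (hcorr p v hw).mp ⟨hp, hv⟩
    exact ⟨⟨hc.1, hc.2⟩, readLE_shift.mp hrd, rfl⟩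
  · rintro ⟨⟨hq1, hq2⟩, hrd, hval⟩
    obtain ⟨p, v⟩ := q
    dsimp only at hval hq2 hrd hq1
    subst hval
    have hc := (hcorr p w hw).mpr ⟨hq1, hq2⟩
    exact ⟨(p, w), ⟨⟨hc.1, hc.2⟩, readLE_shift.mpr hrd, rfl⟩, rfl⟩

lemma svtCount_shift {D D' : Set (ℕ × ℕ)} {T S : ℕ × ℕ → Finset ℕ} {k : ℕ}
    (hcorr : ∀ p v, 1 ≤ v → ((p ∈ D' ∧ v ∈ S p) ↔ (p ∈ D ∧ v + k ∈ T p)))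
    (o : (ℕ × ℕ) × ℕ) (w : ℕ) (hw : 1 ≤ w) :
    svtCount D' S (o.1, o.2 - k) w = svtCount D T o (w + k) := by
  simp only [svtCount]
  rw [← shift_set_eq hcorr o w hw, Set.ncard_image_of_injective _ (up_inj k)]

lemma shift_content_eq {D D' : Set (ℕ × ℕ)} {T S : ℕ × ℕ → Finset ℕ} {k : ℕ}
    (hcorr : ∀ p v, 1 ≤ v → ((p ∈ D' ∧ v ∈ S p) ↔ (p ∈ D ∧ v + k ∈ T p)))
    (w : ℕ) (hw : 1 ≤ w) :
    (fun q : (ℕ × ℕ) × ℕ => (q.1, q.2 + k)) '' {q ∈ svtOcc D' S | q.2 = w}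
      = {q ∈ svtOcc D T | q.2 = w + k} := by
  ext q
  simp only [Set.mem_image, Set.mem_setOf_eq]
  constructor
  · rintro ⟨⟨p, v⟩, ⟨⟨hp, hv⟩, hval⟩, hup⟩
    dsimp only at hval hp hv hup
    subst hval
    subst hup
    have hc := (hcorr p v hw).mp ⟨hp, hv⟩
    exact ⟨⟨hc.1, hc.2⟩, rfl⟩
  · rintro ⟨⟨hq1, hq2⟩, hval⟩
    obtain ⟨p, v⟩ := q
    dsimp only at hval hq2 hq1
    subst hval
    have hc := (hcorr p w hw).mpr ⟨hq1, hq2⟩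
    exact ⟨(p, w), ⟨⟨hc.1, hc.2⟩, rfl⟩, rfl⟩

lemma shift_content_ncard {D D' : Set (ℕ × ℕ)} {T S : ℕ × ℕ → Finset ℕ} {k : ℕ}
    (hcorr : ∀ p v, 1 ≤ v → ((p ∈ D' ∧ v ∈ S p) ↔ (p ∈ D ∧ v + k ∈ T p)))
    (w : ℕ) (hw : 1 ≤ w) :
    {q ∈ svtOcc D' S | q.2 = w}.ncard = {q ∈ svtOcc D T | q.2 = w + k}.ncard := by
  rw [← shift_content_eq hcorr w hw, Set.ncard_image_of_injective _ (up_inj k)]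

lemma svtBallot_any_cut {D : Set (ℕ × ℕ)} {S : ℕ × ℕ → Finset ℕ}
    (hfin : (svtOcc D S).Finite) (hb : svtBallot D S)
    (o : (ℕ × ℕ) × ℕ) (v : ℕ) (hv : 1 ≤ v) :
    svtCount D S o (v + 1) ≤ svtCount D S o v := by
  rcases Set.eq_empty_or_nonempty {q ∈ svtOcc D S | readLE q o} with he | hne
  · have h1 : {q ∈ svtOcc D S | readLE q o ∧ q.2 = v + 1} = ∅ := by
      rw [Set.eq_empty_iff_forall_notMem] at he ⊢
      rintro q ⟨hq, hrd, _⟩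
      exact he q ⟨hq, hrd⟩
    have h2 : {q ∈ svtOcc D S | readLE q o ∧ q.2 = v} = ∅ := by
      rw [Set.eq_empty_iff_forall_notMem] at he ⊢
      rintro q ⟨hq, hrd, _⟩
      exact he q ⟨hq, hrd⟩
    simp only [svtCount, h1, h2, Set.ncard_empty, le_refl]
  · obtain ⟨m, hm, hmax⟩ := exists_readLE_max
      (hfin.subset (fun q hq => hq.1)) hne
    have hcut : ∀ w, {q ∈ svtOcc D S | readLE q o ∧ q.2 = w}
        = {q ∈ svtOcc D S | readLE q m ∧ q.2 = w} := by
      intro w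
      ext q
      simp only [Set.mem_setOf_eq]
      constructor
      · rintro ⟨hq, hrd, hval⟩
        exact ⟨hq, hmax q ⟨hq, hrd⟩, hval⟩
      · rintro ⟨hq, hrd, hval⟩
        exact ⟨hq, readLE_trans hrd hm.2, hval⟩
    simp only [svtCount, hcut]
    exact hb m hm.1 v hv

lemma frozen_low_occ {k : ℕ} {lam nu : ℕ → ℕ} {T : ℕ × ℕ → Finset ℕ}
    (hsvt : IsSVT (cells nu) T) (F : BvsFrozen k lam T)
    (w : ℕ) (hw1 : 1 ≤ w) (hwk : w ≤ k) :
    {q ∈ svtOcc (cells nu) T | q.2 = w}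
      = (fun c => (((w - 1 : ℕ), c), w)) '' Set.Iio (lam (w - 1)) := by
  ext q
  obtain ⟨⟨r0, c0⟩, v0⟩ := q
  simp only [Set.mem_setOf_eq, Set.mem_image, Set.mem_Iio]
  constructor
  · rintro ⟨⟨hcell, hval⟩, hv0⟩
    simp only at hv0 hval
    rw [hv0] at hval
    obtain ⟨h1, h2⟩ := F.low_loc r0 c0 w hval hwk
    refine ⟨c0, ?_, ?_⟩
    · rw [show w - 1 = r0 by omega]; exact h2
    · rw [show w - 1 = r0 by omega, hv0]
  · rintro ⟨c, hc, heq⟩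
    injection heq with h1 h2
    injection h1 with h3 h4
    subst h2 h3 h4
    have hm := F.low_mem (w - 1) c (by omega)
    rw [show w - 1 + 1 = w by omega] at hm
    exact ⟨⟨mem_cells_of_mem hsvt hm, hm⟩, rfl⟩

lemma frozen_low_card {k : ℕ} {lam nu : ℕ → ℕ} {T : ℕ × ℕ → Finset ℕ}
    (hsvt : IsSVT (cells nu) T) (F : BvsFrozen k lam T)
    (w : ℕ) (hw1 : 1 ≤ w) (hwk : w ≤ k) :
    {q ∈ svtOcc (cells nu) T | q.2 = w}.ncard = lam (w - 1) := by
  rw [frozen_low_occ hsvt F w hw1 hwk]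
  rw [Set.ncard_image_of_injective _ (show Function.Injective
    (fun c : ℕ => (((w - 1 : ℕ), c), w)) by intro a b h; simpa using h)]
  have he : (Set.Iio (lam (w - 1))) = ↑(Finset.Iio (lam (w - 1))) := by ext y; simp
  rw [he, Set.ncard_coe_finset, Nat.card_Iio]

lemma frozen_ballot_low {k : ℕ} {lam nu : ℕ → ℕ} {T : ℕ × ℕ → Finset ℕ}
    (hlamp : ∀ i j, i ≤ j → lam j ≤ lam i)
    (hnu : IsPartition nu) (hnuk : ∀ i, k ≤ i → nu i = 0)
    (hsvt : IsSVT (cells nu) T) (F : BvsFrozen k lam T) :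
    svtBallotRange (cells nu) T 1 k := by
  have hOccFin : (svtOcc (cells nu) T).Finite := svtOcc_finite (cells_finite hnuk hnu)
  intro o ho v hv1 hvk
  rcases Nat.lt_or_ge o.1.1 v with hlt | hge
  · have h1 : {q ∈ svtOcc (cells nu) T | readLE q o ∧ q.2 = v + 1} = ∅ := by
      rw [Set.eq_empty_iff_forall_notMem]
      rintro q ⟨hq, hrd, hval⟩
      have hmem : (v + 1) ∈ T (q.1.1, q.1.2) := by
        rw [← hval, Prod.mk.eta]
        exact hq.2
      have hrow : q.1.1 = v := by
        have := (F.low_loc q.1.1 q.1.2 (v + 1) hmem (by omega)).1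
        omega
      simp only [readLE] at hrd
      omega
    simp only [svtCount, h1, Set.ncard_empty]
    omega
  · have h1 : {q ∈ svtOcc (cells nu) T | readLE q o ∧ q.2 = v}
        = {q ∈ svtOcc (cells nu) T | q.2 = v} := by
      ext q
      simp only [Set.mem_setOf_eq]
      constructor
      · rintro ⟨hq, _, hval⟩; exact ⟨hq, hval⟩
      · rintro ⟨hq, hval⟩
        refine ⟨hq, ?_, hval⟩
        have hmem : v ∈ T (q.1.1, q.1.2) := by
          rw [← hval, Prod.mk.eta]
          exact hq.2
        have hrow : q.1.1 = v - 1 := by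
          have := (F.low_loc q.1.1 q.1.2 v hmem (by omega)).1
          omega
        left
        omega
    have h2 : {q ∈ svtOcc (cells nu) T | readLE q o ∧ q.2 = v + 1}.ncard
        ≤ {q ∈ svtOcc (cells nu) T | q.2 = v + 1}.ncard := by
      apply Set.ncard_le_ncard
      · rintro q ⟨hq, _, hval⟩; exact ⟨hq, hval⟩
      · exact hOccFin.subset (fun q hq => hq.1)
    simp only [svtCount, h1]
    rw [frozen_low_card hsvt F v hv1 (by omega)]
    rw [frozen_low_card hsvt F (v + 1) (by omega) hvk] at h2
    have := hlamp (v - 1) (v + 1 - 1) (by omega)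
    omega

end BVS3
section BVS4

lemma bvsS_mem {k : ℕ} {T : ℕ × ℕ → Finset ℕ} {p : ℕ × ℕ} {v : ℕ} :
    v ∈ bvsS k T p ↔ ∃ u, (u ∈ T p ∧ k < u) ∧ u - k = v := by
  simp [bvsS]

lemma lamMinus_cases (k : ℕ) (lam : ℕ → ℕ) (T : ℕ × ℕ → Finset ℕ) (r : ℕ) :
    (bvsLamMinus k lam T r = lam r ∧ ¬∃ v ∈ T (r, lam r - 1), k < v) ∨
    (bvsLamMinus k lam T r = lam r - 1 ∧ ∃ v ∈ T (r, lam r - 1), k < v) := by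
  unfold bvsLamMinus
  by_cases h : ∃ v ∈ T (r, lam r - 1), k < v
  · right; rw [if_pos h]; exact ⟨rfl, h⟩
  · left; rw [if_neg h]; exact ⟨rfl, h⟩

lemma lamMinus_le (k : ℕ) (lam : ℕ → ℕ) (T : ℕ × ℕ → Finset ℕ) (r : ℕ) :
    bvsLamMinus k lam T r ≤ lam r := by
  rcases lamMinus_cases k lam T r with ⟨h, _⟩ | ⟨h, _⟩ <;> omega

lemma lamMinus_ge (k : ℕ) (lam : ℕ → ℕ) (T : ℕ × ℕ → Finset ℕ) (r : ℕ) :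
    lam r - 1 ≤ bvsLamMinus k lam T r := by
  rcases lamMinus_cases k lam T r with ⟨h, _⟩ | ⟨h, _⟩ <;> omega

lemma frozen_high_ge {k : ℕ} {lam : ℕ → ℕ} {T : ℕ × ℕ → Finset ℕ}
    (F : BvsFrozen k lam T) (hlamk : ∀ i, k ≤ i → lam i = 0) :
    ∀ r c v, v ∈ T (r, c) → k < v → bvsLamMinus k lam T r ≤ c := by
  intro r c v hv hkv
  by_contra hcon
  push_neg at hcon
  have hle : bvsLamMinus k lam T r ≤ lam r := lamMinus_le k lam T r
  have hclam : c < lam r := by omega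
  have hrk : r < k := by
    by_contra h
    rw [hlamk r (by omega)] at hclam; omega
  rcases Nat.lt_or_ge (c + 1) (lam r) with h1 | h1
  · have := F.pure r c h1
    rw [this] at hv
    simp only [Finset.mem_singleton] at hv
    omega
  · have hc1 : c = lam r - 1 := by omega
    rcases lamMinus_cases k lam T r with ⟨heq, hno⟩ | ⟨heq, _⟩
    · exact hno ⟨v, by rw [← hc1]; exact hv, hkv⟩
    · omega

lemma frozen_hcorr {k : ℕ} {lam nu : ℕ → ℕ} {T : ℕ × ℕ → Finset ℕ}
    (F : BvsFrozen k lam T) (hlamk : ∀ i, k ≤ i → lam i = 0) :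
    ∀ p v, 1 ≤ v →
      ((p ∈ skewCells (bvsLamMinus k lam T) nu ∧ v ∈ bvsS k T p) ↔
       (p ∈ cells nu ∧ v + k ∈ T p)) := by
  rintro ⟨r, c⟩ v hv
  constructor
  · rintro ⟨⟨hsk1, hsk2⟩, hS⟩
    obtain ⟨u, ⟨hu, hku⟩, huv⟩ := bvsS_mem.mp hS
    have : u = v + k := by omega
    subst this
    exact ⟨hsk2, hu⟩
  · rintro ⟨hcell, hT⟩
    refine ⟨⟨?_, hcell⟩, ?_⟩
    · exact frozen_high_ge F hlamk r c (v + k) hT (by omega)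
    · exact bvsS_mem.mpr ⟨v + k, ⟨hT, by omega⟩, by omega⟩

lemma frozen_remove {k : ℕ} {lam : ℕ → ℕ} {T : ℕ × ℕ → Finset ℕ}
    (F : BvsFrozen k lam T) :
    RemoveInnerCorners lam (bvsLamMinus k lam T) := by
  intro r
  rcases lamMinus_cases k lam T r with ⟨heq, _⟩ | ⟨heq, hex⟩
  · left; exact heq
  · rcases Nat.eq_zero_or_pos (lam r) with h0 | h0
    · left; omega
    · right
      exact ⟨by omega, F.corner r h0 hex⟩

lemma frozen_lamMinus_partition {k : ℕ} {lam : ℕ → ℕ} {T : ℕ × ℕ → Finset ℕ}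
    (hlamp : ∀ i j, i ≤ j → lam j ≤ lam i) (hlamk : ∀ i, k ≤ i → lam i = 0)
    (F : BvsFrozen k lam T) :
    IsPartition (bvsLamMinus k lam T) := by
  constructor
  · have hadj : ∀ n, bvsLamMinus k lam T (n + 1) ≤ bvsLamMinus k lam T n := by
      intro n
      have h1 : bvsLamMinus k lam T (n + 1) ≤ lam (n + 1) := lamMinus_le k lam T (n + 1)
      rcases frozen_remove F n with h | ⟨h2, h3⟩
      · have := hlamp n (n + 1) (by omega)
        omega
      · have := hlamp n (n + 1) (by omega)
        omega
    intro i j hij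
    exact antitone_nat_of_succ_le hadj hij
  · refine ⟨k, fun i hi => ?_⟩
    have := lamMinus_le k lam T i
    rw [hlamk i hi] at this
    omega

lemma frozen_forward {k : ℕ} {lam mu nu : ℕ → ℕ} {T : ℕ × ℕ → Finset ℕ}
    (hlam : IsPartition lam) (hnu : IsPartition nu)
    (hlamk : ∀ i, k ≤ i → lam i = 0) (hmuk : ∀ i, k ≤ i → mu i = 0)
    (hnuk : ∀ i, k ≤ i → nu i = 0)
    (hsvt : IsSVT (cells nu) T) (hss : IsSemistandardSVT (cells nu) T)
    (hcont : svtContentEq (cells nu) T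
      (fun v => if v < k then lam v else if v < 2 * k then mu (v - k) else 0))
    (hbal2 : svtBallotRange (cells nu) T (k + 1) (2 * k))
    (F : BvsFrozen k lam T) :
    IsPartition (bvsLamMinus k lam T) ∧
    RemoveInnerCorners lam (bvsLamMinus k lam T) ∧
    IsSVT (skewCells (bvsLamMinus k lam T) nu) (bvsS k T) ∧
    IsSemistandardSVT (skewCells (bvsLamMinus k lam T) nu) (bvsS k T) ∧
    svtBallot (skewCells (bvsLamMinus k lam T) nu) (bvsS k T) ∧
    svtContentEq (skewCells (bvsLamMinus k lam T) nu) (bvsS k T) mu := by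
  have hcorr := frozen_hcorr (nu := nu) F hlamk
  have hOccFin : (svtOcc (cells nu) T).Finite := svtOcc_finite (cells_finite hnuk hnu)
  have hskewsub : skewCells (bvsLamMinus k lam T) nu ⊆ cells nu := by
    rintro ⟨r, c⟩ ⟨h1, h2⟩
    exact h2
  have hOccSFin : (svtOcc (skewCells (bvsLamMinus k lam T) nu) (bvsS k T)).Finite :=
    svtOcc_finite ((cells_finite hnuk hnu).subset hskewsub)
  have hsvtS : IsSVT (skewCells (bvsLamMinus k lam T) nu) (bvsS k T) := by
    constructor
    · rintro ⟨r, c⟩ ⟨h1, h2⟩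
      dsimp only at h1 h2
      constructor
      · -- nonempty
        rcases Nat.lt_or_ge c (lam r) with hc | hc
        · -- c = lam r - 1, mixed corner
          rcases lamMinus_cases k lam T r with ⟨heq, hno⟩ | ⟨heq, hex⟩
          · omega
          · obtain ⟨u, hu, hku⟩ := hex
            have hc1 : c = lam r - 1 := by omega
            refine ⟨u - k, bvsS_mem.mpr ⟨u, ⟨?_, hku⟩, rfl⟩⟩
            rw [hc1]; exact hu
        · -- c ≥ lam r : all entries high
          obtain ⟨u, hu⟩ := (hsvt.1 (r, c) h2).1
          have hku : k < u := by
            by_contra h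
            push_neg at h
            have := (F.low_loc r c u hu h).2
            omega
          exact ⟨u - k, bvsS_mem.mpr ⟨u, ⟨hu, hku⟩, rfl⟩⟩
      · intro v hv
        obtain ⟨u, ⟨hu, hku⟩, huv⟩ := bvsS_mem.mp hv
        omega
    · rintro ⟨r, c⟩ hp
      rw [Finset.eq_empty_iff_forall_notMem]
      intro v hv
      obtain ⟨u, ⟨hu, hku⟩, huv⟩ := bvsS_mem.mp hv
      simp only [skewCells, Set.mem_setOf_eq, not_and, not_lt] at hp
      rcases Nat.lt_or_ge c (nu r) with hc | hc
      · have := frozen_high_ge F hlamk r c u hu hku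
        have := hp this
        omega
      · have : (r, c) ∉ cells nu := by
          simp only [cells, Set.mem_setOf_eq, not_lt]
          exact hc
        rw [hsvt.2 _ this] at hu
        simp at hu
    
  have hssS : IsSemistandardSVT (skewCells (bvsLamMinus k lam T) nu) (bvsS k T) := by
    constructor
    · intro r c h1 h2 a ha b hb
      obtain ⟨u, ⟨hu, hku⟩, huv⟩ := bvsS_mem.mp ha
      obtain ⟨u', ⟨hu', hku'⟩, huv'⟩ := bvsS_mem.mp hb
      have := hss.1 r c (hskewsub h1) (hskewsub h2) u hu u' hu'
      omega
    · intro r c h1 h2 a ha b hb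
      obtain ⟨u, ⟨hu, hku⟩, huv⟩ := bvsS_mem.mp ha
      obtain ⟨u', ⟨hu', hku'⟩, huv'⟩ := bvsS_mem.mp hb
      have := hss.2 r c (hskewsub h1) (hskewsub h2) u hu u' hu'
      omega
  have hcontS : svtContentEq (skewCells (bvsLamMinus k lam T) nu) (bvsS k T) mu := by
    intro v
    rw [shift_content_ncard hcorr (v + 1) (by omega)]
    have h1 := hcont (v + k)
    rw [show v + k + 1 = v + 1 + k by omega] at h1
    rw [h1]
    dsimp only
    rcases Nat.lt_or_ge v k with hvk | hvk
    · rw [if_neg (by omega), if_pos (by omega), show v + k - k = v by omega]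
    · rw [if_neg (by omega), if_neg (by omega), hmuk v hvk]
  have hbalS : svtBallot (skewCells (bvsLamMinus k lam T) nu) (bvsS k T) := by
    intro o ho v hv
    have ho2 : 1 ≤ o.2 := by
      obtain ⟨u, ⟨hu, hku⟩, huv⟩ := bvsS_mem.mp ho.2
      omega
    have hkey : ∀ w, 1 ≤ w →
        svtCount (skewCells (bvsLamMinus k lam T) nu) (bvsS k T) o w
        = svtCount (cells nu) T (o.1, o.2 + k) (w + k) := by
      intro w hw
      have h := svtCount_shift hcorr (o.1, o.2 + k) w hw
      simpa [show o.2 + k - k = o.2 by omega, Prod.mk.eta] using h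
    rcases Nat.lt_or_ge (v + 1) (k + 1) with hvk | hvk
    · -- v + 1 ≤ k
      rw [hkey (v + 1) (by omega), hkey v hv]
      have hoT := (hcorr o.1 o.2 ho2).mp ⟨ho.1, ho.2⟩
      have ho' : ((o.1, o.2 + k) : (ℕ × ℕ) × ℕ) ∈ svtOcc (cells nu) T :=
        ⟨hoT.1, hoT.2⟩
      have hb := hbal2 (o.1, o.2 + k) ho' (v + k) (by omega) (by omega)
      rw [show v + k + 1 = v + 1 + k by omega] at hb
      exact hb
    · -- v ≥ k : no letters v+1 in S at all
      have hvge : k ≤ v := by omega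
      have hempty : {q ∈ svtOcc (skewCells (bvsLamMinus k lam T) nu) (bvsS k T) |
          q.2 = v + 1} = ∅ := by
        have hc := hcontS v
        rw [hmuk v hvge] at hc
        exact (Set.ncard_eq_zero (hOccSFin.subset (fun q hq => hq.1))).mp hc
      have hzero : svtCount (skewCells (bvsLamMinus k lam T) nu) (bvsS k T) o (v + 1)
          = 0 := by
        simp only [svtCount]
        rw [Set.ncard_eq_zero (hOccSFin.subset (svtCount_set_subset o (v + 1)))]
        rw [Set.eq_empty_iff_forall_notMem] at hempty ⊢
        rintro q ⟨hq, _, hval⟩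
        exact hempty q ⟨hq, hval⟩
      omega
  exact ⟨frozen_lamMinus_partition hlam.1 hlamk F, frozen_remove F, hsvtS, hssS, hbalS, hcontS⟩

end BVS4
section BVS5

lemma bvsRebuild_mem {k : ℕ} {lam : ℕ → ℕ} {S : ℕ × ℕ → Finset ℕ} {p : ℕ × ℕ} {x : ℕ} :
    x ∈ bvsRebuild k lam S p ↔
      ((p.2 < lam p.1 ∧ x = p.1 + 1) ∨ ∃ s ∈ S p, s + k = x) := by
  unfold bvsRebuild
  by_cases h : p.2 < lam p.1
  · rw [if_pos h]
    simp only [Finset.mem_union, Finset.mem_singleton, Finset.mem_image]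
    tauto
  · rw [if_neg h]
    simp only [Finset.mem_union, Finset.notMem_empty, false_or, Finset.mem_image]
    tauto

lemma frozen_recon {k : ℕ} {lam : ℕ → ℕ} {T : ℕ × ℕ → Finset ℕ}
    (F : BvsFrozen k lam T) :
    bvsRebuild k lam (bvsS k T) = T := by
  funext p
  obtain ⟨r, c⟩ := p
  ext x
  rw [bvsRebuild_mem]
  constructor
  · rintro (⟨h1, h2⟩ | ⟨s, hs, hsx⟩)
    · dsimp only at h1 h2
      rw [h2]
      exact F.low_mem r c h1
    · obtain ⟨u, ⟨hu, hku⟩, hus⟩ := bvsS_mem.mp hs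
      rw [show x = u by omega]
      exact hu
  · intro hx
    rcases le_or_gt x k with hxk | hxk
    · obtain ⟨h1, h2⟩ := F.low_loc r c x hx hxk
      left
      exact ⟨h2, h1⟩
    · right
      exact ⟨x - k, bvsS_mem.mpr ⟨x, ⟨hx, hxk⟩, rfl⟩, by omega⟩

lemma bvs_backward {k : ℕ} {lam mu nu l : ℕ → ℕ} {S : ℕ × ℕ → Finset ℕ}
    (hk : 1 ≤ k) (hlam : IsPartition lam) (hnu : IsPartition nu)
    (hlamk : ∀ i, k ≤ i → lam i = 0) (hmuk : ∀ i, k ≤ i → mu i = 0)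
    (hnuk : ∀ i, k ≤ i → nu i = 0) (hsub : ∀ i, lam i ≤ nu i)
    (hl : IsPartition l) (hrm : RemoveInnerCorners lam l)
    (hsvtS : IsSVT (skewCells l nu) S) (hssS : IsSemistandardSVT (skewCells l nu) S)
    (hbalS : svtBallot (skewCells l nu) S) (hcontS : svtContentEq (skewCells l nu) S mu) :
    (IsSVT (cells nu) (bvsRebuild k lam S) ∧
     IsSemistandardSVT (cells nu) (bvsRebuild k lam S) ∧
     svtContentEq (cells nu) (bvsRebuild k lam S)
       (fun v => if v < k then lam v else if v < 2 * k then mu (v - k) else 0) ∧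
     svtBallotRange (cells nu) (bvsRebuild k lam S) 1 k ∧
     svtBallotRange (cells nu) (bvsRebuild k lam S) (k + 1) (2 * k)) ∧
    bvsLamMinus k lam (bvsRebuild k lam S) = l ∧ bvsS k (bvsRebuild k lam S) = S := by
  set T := bvsRebuild k lam S with hT_def
  have hl_le : ∀ i, l i ≤ lam i := by
    intro i; rcases hrm i with h | ⟨h, _⟩ <;> omega
  have hl_ge : ∀ i, lam i - 1 ≤ l i := by
    intro i; rcases hrm i with h | ⟨h, _⟩ <;> omega
  have hl_next : ∀ i, lam (i + 1) ≤ l i := by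
    intro i
    rcases hrm i with h | ⟨h1, h2⟩
    · rw [h]; exact hlam.1 i (i + 1) (by omega)
    · omega
  have hskewsub : skewCells l nu ⊆ cells nu := by
    rintro ⟨r, c⟩ ⟨h1, h2⟩; exact h2
  have hrk_of : ∀ r, 0 < lam r → r < k := by
    intro r h
    by_contra hc
    rw [hlamk r (by omega)] at h; omega
  have hS_skew : ∀ {p x}, x ∈ S p → p ∈ skewCells l nu := fun {p x} hx =>
    mem_cells_of_mem hsvtS hx
  have hS1 : ∀ {p x}, x ∈ S p → 1 ≤ x := fun {p x} hx => one_le_of_mem hsvtS hx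
  -- IsSVT
  have hsvtT : IsSVT (cells nu) T := by
    constructor
    · rintro ⟨r, c⟩ hcell
      constructor
      · rcases Nat.lt_or_ge c (lam r) with hc | hc
        · exact ⟨r + 1, bvsRebuild_mem.mpr (Or.inl ⟨hc, rfl⟩)⟩
        · have hsk : ((r, c) : ℕ × ℕ) ∈ skewCells l nu := by
            refine ⟨?_, hcell⟩
            show l r ≤ c
            have := hl_le r; omega
          obtain ⟨s, hs⟩ := (hsvtS.1 _ hsk).1
          exact ⟨s + k, bvsRebuild_mem.mpr (Or.inr ⟨s, hs, rfl⟩)⟩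
      · intro v hv
        rcases bvsRebuild_mem.mp hv with ⟨h1, h2⟩ | ⟨s, hs, hsx⟩
        · omega
        · have := hS1 hs; omega
    · rintro ⟨r, c⟩ hcell
      rw [Finset.eq_empty_iff_forall_notMem]
      intro x hx
      simp only [cells, Set.mem_setOf_eq, not_lt] at hcell
      rcases bvsRebuild_mem.mp hx with ⟨h1, h2⟩ | ⟨s, hs, hsx⟩
      · have h1' : c < lam r := h1
        have := hsub r; omega
      · have h2' : c < nu r := (hS_skew hs).2
        omega
  -- semistandard
  have hssT : IsSemistandardSVT (cells nu) T := by
    constructor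
    · intro r c hc1 hc2 a ha b hb
      rcases bvsRebuild_mem.mp ha with ⟨h1, h2⟩ | ⟨s, hs, hsx⟩ <;>
        rcases bvsRebuild_mem.mp hb with ⟨g1, g2⟩ | ⟨t, ht, htx⟩
      · have h2' : a = r + 1 := h2
        have g2' : b = r + 1 := g2
        omega
      · have h1' : c < lam r := h1
        have h2' : a = r + 1 := h2
        have := hS1 ht
        have := hrk_of r (by omega)
        omega
      · exfalso
        have hska : l r ≤ c := (hS_skew hs).1
        have g1' : c + 1 < lam r := g1
        have := hl_ge r
        omega
      · have := hssS.1 r c (hS_skew hs) (hS_skew ht) s hs t ht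
        omega
    · intro r c hc1 hc2 a ha b hb
      rcases bvsRebuild_mem.mp ha with ⟨h1, h2⟩ | ⟨s, hs, hsx⟩ <;>
        rcases bvsRebuild_mem.mp hb with ⟨g1, g2⟩ | ⟨t, ht, htx⟩
      · have h2' : a = r + 1 := h2
        have g2' : b = r + 1 + 1 := g2
        omega
      · have h1' : c < lam r := h1
        have h2' : a = r + 1 := h2
        have := hS1 ht
        have := hrk_of r (by omega)
        omega
      · exfalso
        have hska : l r ≤ c := (hS_skew hs).1
        have g1' : c < lam (r + 1) := g1
        have := hl_next r
        omega
      · have := hssS.2 r c (hS_skew hs) (hS_skew ht) s hs t ht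
        omega
  -- frozen
  have hFro : BvsFrozen k lam T := by
    refine ⟨?_, ?_, ?_, ?_⟩
    · intro r c hc
      exact bvsRebuild_mem.mpr (Or.inl ⟨hc, rfl⟩)
    · intro r c v hv hvk
      rcases bvsRebuild_mem.mp hv with ⟨h1, h2⟩ | ⟨s, hs, hsx⟩
      · exact ⟨h2, h1⟩
      · have := hS1 hs; omega
    · intro r c hc
      ext x
      simp only [Finset.mem_singleton]
      constructor
      · intro hx
        rcases bvsRebuild_mem.mp hx with ⟨h1, h2⟩ | ⟨s, hs, hsx⟩
        · exact h2
        · exfalso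
          have hska : l r ≤ c := (hS_skew hs).1
          have := hl_ge r
          omega
      · rintro rfl
        exact bvsRebuild_mem.mpr (Or.inl ⟨(show c < lam r by omega), rfl⟩)
    · rintro r hr ⟨v, hv, hkv⟩
      rcases bvsRebuild_mem.mp hv with ⟨h1, h2⟩ | ⟨s, hs, hsx⟩
      · have h2' : v = r + 1 := h2
        have := hrk_of r hr; omega
      · have hska : l r ≤ lam r - 1 := (hS_skew hs).1
        rcases hrm r with h | ⟨h1, h2⟩
        · omega
        · exact h2
  -- correspondence
  have hcorrT : ∀ p v, 1 ≤ v →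
      ((p ∈ skewCells l nu ∧ v ∈ S p) ↔ (p ∈ cells nu ∧ v + k ∈ T p)) := by
    rintro ⟨r, c⟩ v hv
    constructor
    · rintro ⟨hsk, hS⟩
      exact ⟨hskewsub hsk, bvsRebuild_mem.mpr (Or.inr ⟨v, hS, rfl⟩)⟩
    · rintro ⟨hcell, hT⟩
      rcases bvsRebuild_mem.mp hT with ⟨h1, h2⟩ | ⟨s, hs, hsx⟩
      · exfalso
        have h1' : c < lam r := h1
        have h2' : v + k = r + 1 := h2
        have := hrk_of r (by omega)
        omega
      · have hsv : s = v := by omega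
        subst hsv
        exact ⟨hS_skew hs, hs⟩
  have hOccSFin : (svtOcc (skewCells l nu) S).Finite :=
    svtOcc_finite ((cells_finite hnuk hnu).subset hskewsub)
  -- content
  have hcontT : svtContentEq (cells nu) T
      (fun v => if v < k then lam v else if v < 2 * k then mu (v - k) else 0) := by
    intro v
    dsimp only
    rcases Nat.lt_or_ge v k with hvk | hvk
    · rw [if_pos hvk]
      have := frozen_low_card hsvtT hFro (v + 1) (by omega) (by omega)
      rw [show v + 1 - 1 = v by omega] at this
      exact this
    · rw [if_neg (by omega)]
      have hsh := shift_content_ncard hcorrT (v + 1 - k) (by omega)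
      rw [show v + 1 - k + k = v + 1 by omega] at hsh
      rw [← hsh, show v + 1 - k = (v - k) + 1 by omega, hcontS (v - k)]
      rcases Nat.lt_or_ge v (2 * k) with h2 | h2
      · rw [if_pos h2]
      · rw [if_neg (by omega), hmuk (v - k) (by omega)]
  -- ballot low
  have hbal1T : svtBallotRange (cells nu) T 1 k :=
    frozen_ballot_low hlam.1 hnu hnuk hsvtT hFro
  -- ballot high
  have hbal2T : svtBallotRange (cells nu) T (k + 1) (2 * k) := by
    intro o ho v hv1 hv2
    have e1 := svtCount_shift hcorrT o (v - k) (by omega)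
    have e2 := svtCount_shift hcorrT o (v + 1 - k) (by omega)
    rw [show v - k + k = v by omega] at e1
    rw [show v + 1 - k + k = v + 1 by omega] at e2
    rw [← e1, ← e2, show v + 1 - k = (v - k) + 1 by omega]
    exact svtBallot_any_cut hOccSFin hbalS (o.1, o.2 - k) (v - k) (by omega)
  -- recover the pair
  have hSrec : bvsS k T = S := by
    funext p
    ext x
    rw [bvsS_mem]
    constructor
    · rintro ⟨u, ⟨hu, hku⟩, hux⟩
      rcases bvsRebuild_mem.mp hu with ⟨h1, h2⟩ | ⟨s, hs, hsx⟩
      · exfalso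
        have := hrk_of p.1 (by omega)
        omega
      · rw [show x = s by omega]
        exact hs
    · intro hx
      refine ⟨x + k, ⟨bvsRebuild_mem.mpr (Or.inr ⟨x, hx, rfl⟩), ?_⟩, by omega⟩
      have := hS1 hx
      omega
  have hLrec : bvsLamMinus k lam T = l := by
    funext r
    rcases lamMinus_cases k lam T r with ⟨heq, hno⟩ | ⟨heq, hex⟩
    · rw [heq]
      rcases hrm r with h | ⟨h1, h2⟩
      · omega
      · exfalso
        have hsk : ((r, lam r - 1) : ℕ × ℕ) ∈ skewCells l nu := by
          refine ⟨?_, ?_⟩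
          · show l r ≤ lam r - 1
            omega
          · show lam r - 1 < nu r
            have := hsub r
            omega
        obtain ⟨s, hs⟩ := (hsvtS.1 _ hsk).1
        refine hno ⟨s + k, bvsRebuild_mem.mpr (Or.inr ⟨s, hs, rfl⟩), ?_⟩
        have := hS1 hs
        omega
    · rw [heq]
      rcases Nat.eq_zero_or_pos (lam r) with h0 | h0
      · have := hl_le r; omega
      · obtain ⟨v, hv, hkv⟩ := hex
        rcases bvsRebuild_mem.mp hv with ⟨h1, h2⟩ | ⟨s, hs, hsx⟩
        · have h2' : v = r + 1 := h2
          have := hrk_of r h0; omega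
        · have hska : l r ≤ lam r - 1 := (hS_skew hs).1
          have := hl_ge r
          omega
  exact ⟨⟨hsvtT, hssT, hcontT, hbal1T, hbal2T⟩, hLrec, hSrec⟩

end BVS5
/-- Buch's rule vs. the PY skew rule for the coproduct
coefficients `d_{λμ}^ν`.  The number of semistandard set-valued tableaux of
shape ν with content (λ₁,…,λ_k,μ₁,…,μ_k) whose restricted reverse row words
`row(T)|_[1,k]` and `row(T)|_[k+1,2k]` are both ballot equals the number of
pairs (λ⁻, S) with λ⁻ obtained from λ by removing a set of inner corners and
S a semistandard ballot set-valued tableau of shape ν/λ⁻ and content μ. -/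
theorem buch_vs_skew_rule (k : ℕ) (hk : 1 ≤ k) (lam mu nu : ℕ → ℕ)
    (hlam : IsPartition lam) (hmu : IsPartition mu) (hnu : IsPartition nu)
    (hlamk : ∀ i, k ≤ i → lam i = 0) (hmuk : ∀ i, k ≤ i → mu i = 0)
    (hnuk : ∀ i, k ≤ i → nu i = 0)
    (hsub : ∀ i, lam i ≤ nu i) :
    {T : ℕ × ℕ → Finset ℕ |
        IsSVT (cells nu) T ∧ IsSemistandardSVT (cells nu) T ∧
        svtContentEq (cells nu) T
          (fun v => if v < k then lam v else if v < 2 * k then mu (v - k) else 0) ∧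
        svtBallotRange (cells nu) T 1 k ∧
        svtBallotRange (cells nu) T (k + 1) (2 * k)}.ncard
      = {P : (ℕ → ℕ) × (ℕ × ℕ → Finset ℕ) |
        IsPartition P.1 ∧ RemoveInnerCorners lam P.1 ∧
        IsSVT (skewCells P.1 nu) P.2 ∧ IsSemistandardSVT (skewCells P.1 nu) P.2 ∧
        svtBallot (skewCells P.1 nu) P.2 ∧
        svtContentEq (skewCells P.1 nu) P.2 mu}.ncard := by
  have hlamp := hlam.1
  have key : {P : (ℕ → ℕ) × (ℕ × ℕ → Finset ℕ) |
        IsPartition P.1 ∧ RemoveInnerCorners lam P.1 ∧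
        IsSVT (skewCells P.1 nu) P.2 ∧ IsSemistandardSVT (skewCells P.1 nu) P.2 ∧
        svtBallot (skewCells P.1 nu) P.2 ∧
        svtContentEq (skewCells P.1 nu) P.2 mu}
      = (fun T => (bvsLamMinus k lam T, bvsS k T)) '' {T : ℕ × ℕ → Finset ℕ |
        IsSVT (cells nu) T ∧ IsSemistandardSVT (cells nu) T ∧
        svtContentEq (cells nu) T
          (fun v => if v < k then lam v else if v < 2 * k then mu (v - k) else 0) ∧
        svtBallotRange (cells nu) T 1 k ∧
        svtBallotRange (cells nu) T (k + 1) (2 * k)} := by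
    ext P
    obtain ⟨l, S⟩ := P
    simp only [Set.mem_setOf_eq, Set.mem_image]
    constructor
    · rintro ⟨hl, hrm, hsvtS, hssS, hbalS, hcontS⟩
      obtain ⟨hp, hL, hS⟩ :=
        bvs_backward hk hlam hnu hlamk hmuk hnuk hsub hl hrm hsvtS hssS hbalS hcontS
      refine ⟨bvsRebuild k lam S, hp, ?_⟩
      rw [hL, hS]
    · rintro ⟨T, ⟨hsvt, hss, hcont, hbal1, hbal2⟩, heq⟩
      injection heq with hL hS
      subst hL hS
      have F := bvs_frozen hlamp hnu hlamk hnuk hsvt hss hcont hbal1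
      exact frozen_forward hlam hnu hlamk hmuk hnuk hsvt hss hcont hbal2 F
  have hinj : Set.InjOn (fun T => (bvsLamMinus k lam T, bvsS k T))
      {T : ℕ × ℕ → Finset ℕ |
        IsSVT (cells nu) T ∧ IsSemistandardSVT (cells nu) T ∧
        svtContentEq (cells nu) T
          (fun v => if v < k then lam v else if v < 2 * k then mu (v - k) else 0) ∧
        svtBallotRange (cells nu) T 1 k ∧
        svtBallotRange (cells nu) T (k + 1) (2 * k)} := by
    intro T1 h1 T2 h2 hEq
    have F1 := bvs_frozen hlamp hnu hlamk hnuk h1.1 h1.2.1 h1.2.2.1 h1.2.2.2.1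
    have F2 := bvs_frozen hlamp hnu hlamk hnuk h2.1 h2.2.1 h2.2.2.1 h2.2.2.2.1
    have hS : bvsS k T1 = bvsS k T2 := congrArg Prod.snd hEq
    calc T1 = bvsRebuild k lam (bvsS k T1) := (frozen_recon F1).symm
    _ = bvsRebuild k lam (bvsS k T2) := by rw [hS]
    _ = T2 := frozen_recon F2
  rw [key, Set.ncard_image_of_injOn hinj]
end

section
/- Let k ≥ 1 and let λ, μ, ν be partitions with at most k parts. If T is a semistandard set-valued tableau of shape ν with content (λ₁, …, λ_k, μ₁, …, μ_k) such that the restricted word row(T)|_[1,k] is ballot, then the set of boxes of T containing at least one value greater than k is exactly the skew diagram ν/λ⁻ for some partition λ⁻ obtained from λ by removing a (possibly empty) set of inner corners; that is, it equals the union of ν/λ with some set of inner corners of λ. -/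
open Set

/-- In a semistandard set-valued tableau of shape ν with content
(λ₁,…,λ_k,μ₁,…,μ_k) such that `row(T)|_[1,k]` is ballot, the set of boxes
containing at least one value greater than k is exactly ν/λ⁻ for some
partition λ⁻ obtained from λ by removing a set of inner corners. -/
theorem big_values_shape (k : ℕ) (hk : 1 ≤ k) (lam mu nu : ℕ → ℕ)
    (hlam : IsPartition lam) (hmu : IsPartition mu) (hnu : IsPartition nu)
    (hlamk : ∀ i, k ≤ i → lam i = 0) (hmuk : ∀ i, k ≤ i → mu i = 0)
    (hnuk : ∀ i, k ≤ i → nu i = 0)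
    (T : ℕ × ℕ → Finset ℕ)
    (hT : IsSVT (cells nu) T) (hss : IsSemistandardSVT (cells nu) T)
    (hcont : svtContentEq (cells nu) T
      (fun v => if v < k then lam v else if v < 2 * k then mu (v - k) else 0))
    (hballot : svtBallotRange (cells nu) T 1 k) :
    ∃ lam' : ℕ → ℕ, IsPartition lam' ∧ RemoveInnerCorners lam lam' ∧
      {p : ℕ × ℕ | p ∈ cells nu ∧ ∃ v ∈ T p, k < v} = skewCells lam' nu := by
    classical
  obtain ⟨hlam_anti, hlamN⟩ := hlam
  obtain ⟨hnu_anti, hnuN⟩ := hnu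
  -- entries in row r are at least r+1
  have L1 : ∀ r c, (r, c) ∈ cells nu → ∀ v ∈ T (r, c), r + 1 ≤ v := by
    intro r
    induction r with
    | zero => intro c hc v hv; exact (hT.1 _ hc).2 v hv
    | succ r ih =>
      intro c hc v hv
      have hc' : (r, c) ∈ cells nu := by
        simp only [cells, mem_setOf_eq] at hc ⊢
        exact lt_of_lt_of_le hc (hnu_anti r (r + 1) (Nat.le_succ r))
      obtain ⟨u, hu⟩ := (hT.1 _ hc').1
      have h1 := hss.2 r c hc' hc u hu v hv
      have h2 := ih c hc' u hu
      omega
  -- entries weakly increase along rows (strictly separated boxes)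
  have L2 : ∀ r d c, (r, c + d + 1) ∈ cells nu →
      ∀ a ∈ T (r, c), ∀ b ∈ T (r, c + d + 1), a ≤ b := by
    intro r d
    induction d with
    | zero =>
      intro c hc a ha b hb
      have hc0 : (r, c) ∈ cells nu := by
        simp only [cells, mem_setOf_eq] at hc ⊢; omega
      exact hss.1 r c hc0 hc a ha b hb
    | succ d ih =>
      intro c hc a ha b hb
      have hcd : (r, c + d + 1) ∈ cells nu := by
        simp only [cells, mem_setOf_eq] at hc ⊢; omega
      obtain ⟨u, hu⟩ := (hT.1 _ hcd).1
      have h1 := ih c hcd a ha u hu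
      have h2 := hss.1 r (c + d + 1) hcd (by
        simpa [show c + d + 1 + 1 = c + (d + 1) + 1 by omega] using hc) u hu b (by
        simpa [show c + d + 1 + 1 = c + (d + 1) + 1 by omega] using hb)
      omega
  have L2' : ∀ r c c', c < c' → (r, c') ∈ cells nu →
      ∀ a ∈ T (r, c), ∀ b ∈ T (r, c'), a ≤ b := by
    intro r c c' hlt hmem a ha b hb
    have he : c + (c' - c - 1) + 1 = c' := by omega
    have h := L2 r (c' - c - 1) c (by rwa [he]) a ha b (by rwa [he])
    exact h
  have hrknu : ∀ r, 0 < nu r → r < k := by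
    intro r h
    by_contra hr
    rw [hnuk r (le_of_not_gt hr)] at h; omega
  -- every small entry in row r equals r+1
  have L3 : ∀ r c v, (r, c) ∈ cells nu → v ∈ T (r, c) → v ≤ k → v = r + 1 := by
    intro r
    induction r using Nat.strong_induction_on with
    | _ r IH =>
    intro c v hc hv hvk
    by_contra hne
    have hcn : c < nu r := hc
    have hv2 : r + 2 ≤ v := by
      have := L1 r c hc v hv; omega
    set F : Finset ℕ := (Finset.range (nu r)).filter
      (fun c' => ∃ u ∈ T (r, c'), u ≤ k) with hF
    have hcF : c ∈ F := by
      simp only [hF, Finset.mem_filter, Finset.mem_range]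
      exact ⟨hcn, v, hv, hvk⟩
    have hFne : F.Nonempty := ⟨c, hcF⟩
    set c₀ := F.max' hFne with hc0
    have hc₀F : c₀ ∈ F := F.max'_mem hFne
    have hc₀r : c₀ < nu r := by
      have := hc₀F; simp only [hF, Finset.mem_filter, Finset.mem_range] at this
      exact this.1
    have hc₀nu : (r, c₀) ∈ cells nu := hc₀r
    obtain ⟨u₀, hu₀, hu₀k⟩ : ∃ u ∈ T (r, c₀), u ≤ k := by
      have := hc₀F; simp only [hF, Finset.mem_filter, Finset.mem_range] at this
      exact this.2
    set G : Finset ℕ := (T (r, c₀)).filter (fun u => u ≤ k) with hG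
    have hGne : G.Nonempty := ⟨u₀, by simp [hG, hu₀, hu₀k]⟩
    set w := G.max' hGne with hw
    have hwG : w ∈ G := G.max'_mem hGne
    have hwT : w ∈ T (r, c₀) := by
      have := hwG; simp only [hG, Finset.mem_filter] at this; exact this.1
    have hwk : w ≤ k := by
      have := hwG; simp only [hG, Finset.mem_filter] at this; exact this.2
    have hwmax : ∀ u ∈ T (r, c₀), u ≤ k → u ≤ w := by
      intro u h1 h2
      exact G.le_max' u (by simp [hG, h1, h2])
    have hcc₀ : c ≤ c₀ := F.le_max' c hcF
    have hw2 : r + 2 ≤ w := by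
      rcases eq_or_lt_of_le hcc₀ with h | h
      · have := hwmax v (by rwa [← h]) hvk; omega
      · have := L2' r c c₀ h hc₀nu v hv w hwT; omega
    have hoOcc : ((r, c₀), w) ∈ svtOcc (cells nu) T := ⟨hc₀nu, hwT⟩
    have hball := hballot ((r, c₀), w) hoOcc (w - 1) (by omega) (by omega)
    rw [show w - 1 + 1 = w by omega] at hball
    have hzero : svtCount (cells nu) T ((r, c₀), w) (w - 1) = 0 := by
      have hemp : {q ∈ svtOcc (cells nu) T | readLE q ((r, c₀), w) ∧ q.2 = w - 1}
          = (∅ : Set ((ℕ × ℕ) × ℕ)) := by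
        ext q
        obtain ⟨⟨qr, qc⟩, qv⟩ := q
        simp only [mem_setOf_eq, mem_empty_iff_false, iff_false, svtOcc, readLE]
        rintro ⟨⟨hq1, hq2⟩, hle, hqv⟩
        obtain rfl : qv = w - 1 := hqv
        rcases hle with h | ⟨heq, h | ⟨heq2, hge⟩⟩
        · have := IH qr h qc (w - 1) hq1 hq2 (by omega)
          omega
        · subst heq
          have hqF : qc ∈ F := by
            simp only [hF, Finset.mem_filter, Finset.mem_range]
            exact ⟨hq1, w - 1, hq2, by omega⟩
          have := F.le_max' qc hqF
          omega
        · omega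
      simp only [svtCount]
      rw [hemp]
      exact Set.ncard_empty _
    rw [hzero, Nat.le_zero] at hball
    have hfin : {q ∈ svtOcc (cells nu) T | readLE q ((r, c₀), w) ∧ q.2 = w}.Finite := by
      apply Set.Finite.subset
        (((Set.finite_Iio k).prod (Set.finite_Iio (nu 0))).prod (Set.finite_singleton w))
      rintro q ⟨⟨hq1, hq2⟩, hle, hqv⟩
      refine ⟨⟨?_, ?_⟩, hqv⟩
      · exact hrknu q.1.1 (by have : q.1.2 < nu q.1.1 := hq1; omega)
      · exact lt_of_lt_of_le hq1 (hnu_anti 0 q.1.1 (Nat.zero_le _))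
    have hemp2 := (Set.ncard_eq_zero hfin).mp hball
    have hoin : ((r, c₀), w) ∈
        {q ∈ svtOcc (cells nu) T | readLE q ((r, c₀), w) ∧ q.2 = w} :=
      ⟨hoOcc, Or.inr ⟨rfl, Or.inr ⟨rfl, le_rfl⟩⟩, rfl⟩
    rw [hemp2] at hoin
    exact hoin
  -- the finset of small boxes in row r
  set Sr : ℕ → Finset ℕ :=
    fun r => (Finset.range (nu r)).filter (fun c' => r + 1 ∈ T (r, c')) with hSr
  have memSr : ∀ r c', c' ∈ Sr r ↔ c' < nu r ∧ r + 1 ∈ T (r, c') := by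
    intro r c'
    simp [hSr, Finset.mem_filter, Finset.mem_range]
  have L4 : ∀ r, r < k → (Sr r).card = lam r := by
    intro r hr
    have hc := hcont r
    have hc2 : ((fun v => if v < k then lam v else if v < 2 * k then mu (v - k) else 0) r)
        = lam r := by simp [hr]
    rw [hc2] at hc
    rw [← hc]
    have himg : {o ∈ svtOcc (cells nu) T | o.2 = r + 1} =
        (fun c' => ((r, c'), r + 1)) '' ↑(Sr r) := by
      ext o
      simp only [mem_setOf_eq, mem_image, Finset.mem_coe, svtOcc]
      constructor
      · rintro ⟨⟨h1, h2⟩, h3⟩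
        obtain ⟨⟨orr, oc⟩, ov⟩ := o
        obtain rfl : ov = r + 1 := h3
        have hrr := L3 orr oc (r + 1) h1 h2 (by omega)
        have horr : orr = r := by omega
        subst horr
        exact ⟨oc, (memSr orr oc).mpr ⟨h1, h2⟩, rfl⟩
      · rintro ⟨c', hc', rfl⟩
        obtain ⟨h1, h2⟩ := (memSr r c').mp hc'
        exact ⟨⟨h1, h2⟩, rfl⟩
    rw [himg, Set.ncard_image_of_injective _ (by intro a b h; simpa using h),
      Set.ncard_coe_finset]
  have down : ∀ r c c', c' ≤ c → c ∈ Sr r → c' ∈ Sr r := by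
    intro r c c' hle hc
    obtain ⟨h1, h2⟩ := (memSr r c).mp hc
    rcases eq_or_lt_of_le hle with h | h
    · subst h; exact hc
    · refine (memSr r c').mpr ⟨by omega, ?_⟩
      have hc'nu : (r, c') ∈ cells nu := by
        show c' < nu r; omega
      obtain ⟨u, hu⟩ := (hT.1 _ hc'nu).1
      have hu1 := L1 r c' hc'nu u hu
      have hu2 := L2' r c' c h (by exact h1) u hu (r + 1) h2
      have : u = r + 1 := by omega
      rwa [← this]
  have L6 : ∀ r, r < k → ∀ c, c ∈ Sr r ↔ c < lam r := by
    intro r hr c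
    constructor
    · intro hcin
      have hsub : Finset.range (c + 1) ⊆ Sr r := by
        intro x hx
        exact down r c x (by simp only [Finset.mem_range] at hx; omega) hcin
      have := Finset.card_le_card hsub
      rw [Finset.card_range, L4 r hr] at this
      omega
    · intro hclt
      by_contra hcn
      have hsub : Sr r ⊆ Finset.range c := by
        intro x hx
        simp only [Finset.mem_range]
        by_contra hge
        exact hcn (down r x c (by omega) hx)
      have := Finset.card_le_card hsub
      rw [Finset.card_range, L4 r hr] at this
      omega
  have hrklam : ∀ r, 0 < lam r → r < k := by
    intro r h
    by_contra hr
    rw [hlamk r (le_of_not_gt hr)] at h; omega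
  have lamle : ∀ r, lam r ≤ nu r := by
    intro r
    by_cases h0 : lam r = 0
    · omega
    · have hr := hrklam r (by omega)
      have hmem := (L6 r hr (lam r - 1)).mpr (by omega)
      have := ((memSr r (lam r - 1)).mp hmem).1
      omega
  -- boxes at column ≥ lam r contain a big value
  have B1 : ∀ r c, lam r ≤ c → (r, c) ∈ cells nu → ∃ v ∈ T (r, c), k < v := by
    intro r c hlc hcnu
    obtain ⟨v, hv⟩ := (hT.1 _ hcnu).1
    refine ⟨v, hv, ?_⟩
    by_contra hvk
    push_neg at hvk
    have hveq := L3 r c v hcnu hv hvk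
    have hcnu' : c < nu r := hcnu
    have hr : r < k := hrknu r (by omega)
    have : c ∈ Sr r := (memSr r c).mpr ⟨hcnu', by rwa [← hveq]⟩
    have := (L6 r hr c).mp this
    omega
  -- boxes strictly left of the last box of row r of lam contain no big value
  have B2 : ∀ r c, c + 1 < lam r → ¬ ∃ v ∈ T (r, c), k < v := by
    intro r c hcl
    rintro ⟨v, hv, hkv⟩
    have hr : r < k := hrklam r (by omega)
    have hmem := (L6 r hr (c + 1)).mpr hcl
    obtain ⟨h1, h2⟩ := (memSr r (c + 1)).mp hmem
    have hcnu : (r, c) ∈ cells nu := by show c < nu r; omega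
    have := hss.1 r c hcnu (by exact h1) v hv (r + 1) h2
    have : r + 1 ≤ k := by omega
    omega
  -- corner condition for the mixed box
  have B3 : ∀ r, 1 ≤ lam r → (∃ v ∈ T (r, lam r - 1), k < v) → lam (r + 1) < lam r := by
    intro r h1 ⟨v, hv, hkv⟩
    by_contra hge
    push_neg at hge
    have heq : lam r ≤ lam (r + 1) := hge
    have hr1 : r + 1 < k := hrklam (r + 1) (by omega)
    have hmem := (L6 (r + 1) hr1 (lam r - 1)).mpr (by omega)
    obtain ⟨hm1, hm2⟩ := (memSr (r + 1) (lam r - 1)).mp hmem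
    have hcnu : (r, lam r - 1) ∈ cells nu := by
      show lam r - 1 < nu r
      have := lamle r; omega
    have := hss.2 r (lam r - 1) hcnu (by exact hm1) v hv (r + 2) hm2
    omega
  set lam' : ℕ → ℕ := fun r =>
    if 1 ≤ lam r ∧ ∃ v ∈ T (r, lam r - 1), k < v then lam r - 1 else lam r with hlam'
  have lam'le : ∀ r, lam' r ≤ lam r := by
    intro r
    simp only [hlam']
    split <;> omega
  have lam'cases : ∀ r, lam' r = lam r ∨ (lam' r + 1 = lam r ∧ lam (r + 1) < lam r) := by
    intro r
    simp only [hlam']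
    split
    · rename_i h
      right
      exact ⟨by omega, B3 r h.1 h.2⟩
    · left; rfl
  refine ⟨lam', ⟨?_, ⟨k, fun i hi => by have := lam'le i; have := hlamk i hi; omega⟩⟩,
    lam'cases, ?_⟩
  · intro i j hij
    refine antitone_nat_of_succ_le ?_ hij
    intro r
    rcases lam'cases (r + 1) with h | ⟨h1, h2⟩ <;>
      rcases lam'cases r with h' | ⟨h1', h2'⟩ <;>
      have := hlam_anti r (r + 1) (Nat.le_succ r) <;> omega
  · ext ⟨r, c⟩
    simp only [mem_setOf_eq, skewCells, cells]
    constructor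
    · rintro ⟨hcnu, v, hv, hkv⟩
      refine ⟨?_, hcnu⟩
      by_contra hlt
      push_neg at hlt
      rcases Nat.lt_or_ge (c + 1) (lam r) with h | h
      · exact B2 r c h ⟨v, hv, hkv⟩
      · have hle := lam'le r
        have hc1 : c + 1 = lam r := by omega
        have hmix : 1 ≤ lam r ∧ ∃ v ∈ T (r, lam r - 1), k < v :=
          ⟨by omega, by rw [show lam r - 1 = c by omega]; exact ⟨v, hv, hkv⟩⟩
        have : lam' r = lam r - 1 := by simp only [hlam']; rw [if_pos hmix]
        omega
    · rintro ⟨hge, hcnu⟩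
      refine ⟨hcnu, ?_⟩
      rcases Nat.lt_or_ge c (lam r) with h | h
      · by_cases hmix : 1 ≤ lam r ∧ ∃ v ∈ T (r, lam r - 1), k < v
        · have hval : lam' r = lam r - 1 := by simp only [hlam']; rw [if_pos hmix]
          have : c = lam r - 1 := by omega
          rw [this]
          exact hmix.2
        · have hval : lam' r = lam r := by simp only [hlam']; rw [if_neg hmix]
          omega
      · exact B1 r c h hcnu
end

section
/- Let μ and μ' be partitions. The number of semistandard ballot set-valued tableaux of shape (1)⊕μ (the diagram of μ placed corner to corner to the lower left of a single box) with content μ' equals 1 if μ' is obtained from μ by adding a nonempty set of outer corners of μ, and equals 0 otherwise. -/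
open Set

section OplusOneBox

/-! Auxiliary development for `oplus_one_box_count`. -/

private lemma partition_zero {f : ℕ → ℕ} (hf : IsPartition f) :
    ∀ i, numParts f ≤ i → f i = 0 :=
  Nat.sInf_mem hf.2

private lemma lt_numParts {f : ℕ → ℕ} (hf : IsPartition f) {i : ℕ} (h : 0 < f i) :
    i < numParts f := by
  by_contra hc
  push_neg at hc
  have := partition_zero hf i hc
  omega

/-- The shape (1)⊕μ. -/
private def Dsh (mu : ℕ → ℕ) : Set (ℕ × ℕ) :=
  oplusShape (fun i => if i = 0 then 1 else 0) mu

private lemma mem_Dsh (mu : ℕ → ℕ) (p : ℕ × ℕ) :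
    p ∈ Dsh mu ↔ (1 ≤ p.2 ∧ p.2 < 1 + mu p.1) ∨ p = (numParts mu, 0) := by
  obtain ⟨a, b⟩ := p
  simp only [Dsh, oplusShape, Set.mem_setOf_eq]
  constructor
  · rintro (⟨h1, h2⟩ | ⟨h1, h2⟩)
    · left; constructor <;> simp_all
    · right
      simp only [Prod.mk.injEq]
      split at h2
      · next h => omega
      · omega
  · rintro (⟨h1, h2⟩ | h)
    · left; constructor <;> simp_all
    · right
      simp only [Prod.mk.injEq] at h
      obtain ⟨rfl, rfl⟩ := h
      simp

private lemma Dsh_finite {mu : ℕ → ℕ} (hmu : IsPartition mu) : (Dsh mu).Finite := by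
  apply Set.Finite.subset (Set.finite_Icc ((0, 0) : ℕ × ℕ) (numParts mu, mu 0))
  rintro ⟨a, b⟩ hp
  rw [mem_Dsh] at hp
  dsimp only at hp
  simp only [Set.mem_Icc, Prod.mk_le_mk]
  rcases hp with ⟨h1, h2⟩ | h
  · have h0 : 0 < mu a := by omega
    have ha := lt_numParts hmu h0
    have hb := hmu.1 0 a (Nat.zero_le a)
    omega
  · simp only [Prod.mk.injEq] at h
    omega

private lemma occ_finite {mu : ℕ → ℕ} {S : ℕ × ℕ → Finset ℕ} (hmu : IsPartition mu)
    (hS0 : ∀ p ∉ Dsh mu, S p = ∅) : (svtOcc (Dsh mu) S).Finite := by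
  apply Set.Finite.subset
    ((Dsh_finite hmu).biUnion
      (fun p (_ : p ∈ Dsh mu) => (Set.finite_singleton p).prod (S p).finite_toSet))
  rintro ⟨p, x⟩ ⟨hp, hx⟩
  exact Set.mem_biUnion hp (Set.mem_prod.2 ⟨rfl, hx⟩)

end OplusOneBox
section OplusOneBox2

variable {mu mu' : ℕ → ℕ} {S : ℕ × ℕ → Finset ℕ}

private lemma occ_iff (hrows : ∀ i c, 1 ≤ c → c ≤ mu i → S (i, c) = {i + 1})
    (hS0 : ∀ p ∉ Dsh mu, S p = ∅) (q : (ℕ × ℕ) × ℕ) :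
    q ∈ svtOcc (Dsh mu) S ↔
      (1 ≤ q.1.2 ∧ q.1.2 ≤ mu q.1.1 ∧ q.2 = q.1.1 + 1) ∨
      (q.1 = (numParts mu, 0) ∧ q.2 ∈ S (numParts mu, 0)) := by
  obtain ⟨⟨a, b⟩, x⟩ := q
  simp only [svtOcc, Set.mem_setOf_eq, mem_Dsh]
  constructor
  · rintro ⟨h1 | h1, h2⟩
    · left
      have hb : b ≤ mu a := by omega
      rw [hrows a b h1.1 hb] at h2
      simp only [Finset.mem_singleton] at h2
      exact ⟨h1.1, hb, h2⟩
    · exact Or.inr ⟨h1, h1 ▸ h2⟩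
  · rintro (⟨h1, h2, h3⟩ | ⟨h1, h2⟩)
    · refine ⟨Or.inl ⟨h1, by omega⟩, ?_⟩
      rw [hrows a b h1 h2]
      simp [h3]
    · exact ⟨Or.inr h1, h1 ▸ h2⟩

private def rowOcc (mu : ℕ → ℕ) (v lo : ℕ) : Finset ((ℕ × ℕ) × ℕ) :=
  (Finset.Icc lo (mu (v - 1))).image (fun c => ((v - 1, c), v))

private lemma rowOcc_card (mu : ℕ → ℕ) (v lo : ℕ) :
    (rowOcc mu v lo).card = mu (v - 1) + 1 - lo := by
  rw [rowOcc, Finset.card_image_of_injective _ (fun a b h => by simpa using h),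
    Nat.card_Icc]

private lemma mem_rowOcc {mu : ℕ → ℕ} {v lo : ℕ} {q : (ℕ × ℕ) × ℕ} :
    q ∈ rowOcc mu v lo ↔
      lo ≤ q.1.2 ∧ q.1.2 ≤ mu (v - 1) ∧ q.1.1 = v - 1 ∧ q.2 = v := by
  obtain ⟨⟨a, b⟩, x⟩ := q
  simp only [rowOcc, Finset.mem_image, Finset.mem_Icc, Prod.mk.injEq]
  constructor
  · rintro ⟨c, ⟨h1, h2⟩, ⟨rfl, rfl⟩, rfl⟩
    exact ⟨h1, h2, rfl, rfl⟩
  · rintro ⟨h1, h2, rfl, rfl⟩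
    exact ⟨b, ⟨h1, h2⟩, ⟨rfl, rfl⟩, rfl⟩

private lemma count_upper_lt (hrows : ∀ i c, 1 ≤ c → c ≤ mu i → S (i, c) = {i + 1})
    (hS0 : ∀ p ∉ Dsh mu, S p = ∅) {r c₀ w v : ℕ} (hrm : r < numParts mu)
    (hv1 : 1 ≤ v) (hvr : v ≤ r) :
    svtCount (Dsh mu) S ((r, c₀), w) v = mu (v - 1) := by
  have hset : {q ∈ svtOcc (Dsh mu) S | readLE q ((r, c₀), w) ∧ q.2 = v}
      = ↑(rowOcc mu v 1) := by
    ext ⟨⟨a, b⟩, x⟩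
    simp only [Set.mem_setOf_eq, occ_iff hrows hS0, readLE, Finset.mem_coe, mem_rowOcc,
      Prod.mk.injEq]
    constructor
    · rintro ⟨⟨hb1, hb2, hx⟩ | ⟨⟨rfl, rfl⟩, _⟩, h2, rfl⟩
      · obtain rfl : a = x - 1 := by omega
        exact ⟨hb1, hb2, rfl, rfl⟩
      · omega
    · rintro ⟨h1, h2, rfl, rfl⟩
      exact ⟨Or.inl ⟨h1, h2, by omega⟩, by omega, rfl⟩
  rw [svtCount, hset, Set.ncard_coe_finset, rowOcc_card]
  omega

private lemma count_upper_eq (hrows : ∀ i c, 1 ≤ c → c ≤ mu i → S (i, c) = {i + 1})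
    (hS0 : ∀ p ∉ Dsh mu, S p = ∅) {r c₀ : ℕ} (hrm : r < numParts mu) (hc₀ : 1 ≤ c₀) :
    svtCount (Dsh mu) S ((r, c₀), r + 1) (r + 1) = mu r + 1 - c₀ := by
  have hset : {q ∈ svtOcc (Dsh mu) S | readLE q ((r, c₀), r + 1) ∧ q.2 = r + 1}
      = ↑(rowOcc mu (r + 1) c₀) := by
    ext ⟨⟨a, b⟩, x⟩
    simp only [Set.mem_setOf_eq, occ_iff hrows hS0, readLE, Finset.mem_coe, mem_rowOcc,
      Prod.mk.injEq, Nat.add_sub_cancel]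
    constructor
    · rintro ⟨⟨hb1, hb2, hx⟩ | ⟨⟨rfl, rfl⟩, _⟩, h2, rfl⟩
      · obtain rfl : a = r := by omega
        exact ⟨by omega, hb2, rfl, rfl⟩
      · omega
    · rintro ⟨h1, h2, rfl, rfl⟩
      exact ⟨Or.inl ⟨by omega, h2, rfl⟩, by omega, rfl⟩
  rw [svtCount, hset, Set.ncard_coe_finset, rowOcc_card, Nat.add_sub_cancel]

private lemma count_upper_gt (hrows : ∀ i c, 1 ≤ c → c ≤ mu i → S (i, c) = {i + 1})
    (hS0 : ∀ p ∉ Dsh mu, S p = ∅) {r c₀ w v : ℕ} (hrm : r < numParts mu)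
    (hv : r + 2 ≤ v) :
    svtCount (Dsh mu) S ((r, c₀), w) v = 0 := by
  have hset : {q ∈ svtOcc (Dsh mu) S | readLE q ((r, c₀), w) ∧ q.2 = v} = ∅ := by
    ext ⟨⟨a, b⟩, x⟩
    simp only [Set.mem_setOf_eq, occ_iff hrows hS0, readLE, Set.mem_empty_iff_false,
      iff_false, not_and, Prod.mk.injEq]
    rintro (h1 | ⟨⟨rfl, rfl⟩, _⟩) h2 <;> omega
  rw [svtCount, hset, Set.ncard_empty]

end OplusOneBox2
section OplusOneBox3

variable {mu mu' : ℕ → ℕ} {S : ℕ × ℕ → Finset ℕ}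

private lemma rowOcc_disj_pt {mu : ℕ → ℕ} {v x : ℕ} :
    Disjoint (rowOcc mu v 1) {((numParts mu, 0), x)} := by
  rw [Finset.disjoint_right]
  intro q hq hq'
  rw [Finset.mem_singleton] at hq
  rw [mem_rowOcc] at hq'
  subst hq
  simp at hq'

private lemma count_bottom (hmu : IsPartition mu)
    (hrows : ∀ i c, 1 ≤ c → c ≤ mu i → S (i, c) = {i + 1})
    (hS0 : ∀ p ∉ Dsh mu, S p = ∅) {w v : ℕ} (hv1 : 1 ≤ v) :
    svtCount (Dsh mu) S ((numParts mu, 0), w) v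
      = mu (v - 1) + (if v ∈ S (numParts mu, 0) ∧ w ≤ v then 1 else 0) := by
  classical
  have hrowlt : ∀ b : ℕ, 1 ≤ b → b ≤ mu (v - 1) → v - 1 < numParts mu :=
    fun b h1 h2 => lt_numParts hmu (by omega)
  by_cases hb : v ∈ S (numParts mu, 0) ∧ w ≤ v
  · have hset : {q ∈ svtOcc (Dsh mu) S | readLE q ((numParts mu, 0), w) ∧ q.2 = v}
        = ↑(rowOcc mu v 1 ∪ {((numParts mu, 0), v)}) := by
      ext ⟨⟨a, b⟩, x⟩
      simp only [Set.mem_setOf_eq, occ_iff hrows hS0, readLE, Finset.coe_union,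
        Set.mem_union, Finset.mem_coe, mem_rowOcc, Finset.mem_singleton,
        Finset.coe_singleton, Set.mem_singleton_iff, Prod.mk.injEq]
      constructor
      · rintro ⟨⟨hb1, hb2, hx⟩ | ⟨⟨rfl, rfl⟩, hmem⟩, h2, rfl⟩
        · left
          obtain rfl : a = x - 1 := by omega
          exact ⟨hb1, hb2, rfl, rfl⟩
        · right
          exact ⟨⟨rfl, rfl⟩, rfl⟩
      · rintro (⟨h1, h2, rfl, rfl⟩ | ⟨⟨rfl, rfl⟩, rfl⟩)
        · exact ⟨Or.inl ⟨h1, h2, by omega⟩, Or.inl (hrowlt b h1 h2), rfl⟩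
        · exact ⟨Or.inr ⟨⟨rfl, rfl⟩, hb.1⟩, Or.inr ⟨rfl, Or.inr ⟨rfl, hb.2⟩⟩, rfl⟩
    rw [svtCount, hset, Set.ncard_coe_finset,
      Finset.card_union_of_disjoint rowOcc_disj_pt, rowOcc_card, Finset.card_singleton,
      if_pos hb]
    omega
  · have hset : {q ∈ svtOcc (Dsh mu) S | readLE q ((numParts mu, 0), w) ∧ q.2 = v}
        = ↑(rowOcc mu v 1) := by
      ext ⟨⟨a, b⟩, x⟩
      simp only [Set.mem_setOf_eq, occ_iff hrows hS0, readLE, Finset.mem_coe, mem_rowOcc,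
        Prod.mk.injEq]
      constructor
      · rintro ⟨⟨hb1, hb2, hx⟩ | ⟨⟨rfl, rfl⟩, hmem⟩, h2, rfl⟩
        · obtain rfl : a = x - 1 := by omega
          exact ⟨hb1, hb2, rfl, rfl⟩
        · exact absurd ⟨hmem, by omega⟩ hb
      · rintro ⟨h1, h2, rfl, rfl⟩
        exact ⟨Or.inl ⟨h1, h2, by omega⟩, Or.inl (hrowlt b h1 h2), rfl⟩
    rw [svtCount, hset, Set.ncard_coe_finset, rowOcc_card, if_neg hb]
    omega

private lemma content_count (hmu : IsPartition mu)
    (hrows : ∀ i c, 1 ≤ c → c ≤ mu i → S (i, c) = {i + 1})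
    (hS0 : ∀ p ∉ Dsh mu, S p = ∅) (v : ℕ) :
    {o ∈ svtOcc (Dsh mu) S | o.2 = v + 1}.ncard
      = mu v + (if v + 1 ∈ S (numParts mu, 0) then 1 else 0) := by
  classical
  by_cases hb : v + 1 ∈ S (numParts mu, 0)
  · have hset : {o ∈ svtOcc (Dsh mu) S | o.2 = v + 1}
        = ↑(rowOcc mu (v + 1) 1 ∪ {((numParts mu, 0), v + 1)}) := by
      ext ⟨⟨a, b⟩, x⟩
      simp only [Set.mem_setOf_eq, occ_iff hrows hS0, Finset.coe_union,
        Set.mem_union, Finset.mem_coe, mem_rowOcc, Finset.coe_singleton,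
        Set.mem_singleton_iff, Prod.mk.injEq, Nat.add_sub_cancel]
      constructor
      · rintro ⟨⟨hb1, hb2, hx⟩ | ⟨⟨rfl, rfl⟩, hmem⟩, rfl⟩
        · left
          obtain rfl : a = v := by omega
          exact ⟨hb1, hb2, rfl, rfl⟩
        · exact Or.inr ⟨⟨rfl, rfl⟩, rfl⟩
      · rintro (⟨h1, h2, rfl, rfl⟩ | ⟨⟨rfl, rfl⟩, rfl⟩)
        · exact ⟨Or.inl ⟨h1, h2, rfl⟩, rfl⟩
        · exact ⟨Or.inr ⟨⟨rfl, rfl⟩, hb⟩, rfl⟩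
    rw [hset, Set.ncard_coe_finset, Finset.card_union_of_disjoint rowOcc_disj_pt,
      rowOcc_card, Finset.card_singleton, if_pos hb]
    simp
  · have hset : {o ∈ svtOcc (Dsh mu) S | o.2 = v + 1} = ↑(rowOcc mu (v + 1) 1) := by
      ext ⟨⟨a, b⟩, x⟩
      simp only [Set.mem_setOf_eq, occ_iff hrows hS0, Finset.mem_coe, mem_rowOcc,
        Prod.mk.injEq, Nat.add_sub_cancel]
      constructor
      · rintro ⟨⟨hb1, hb2, hx⟩ | ⟨⟨rfl, rfl⟩, hmem⟩, rfl⟩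
        · obtain rfl : a = v := by omega
          exact ⟨hb1, hb2, rfl, rfl⟩
        · exact absurd hmem hb
      · rintro ⟨h1, h2, rfl, rfl⟩
        exact ⟨Or.inl ⟨h1, h2, rfl⟩, rfl⟩
    rw [hset, Set.ncard_coe_finset, rowOcc_card, if_neg hb]
    simp

end OplusOneBox3
section OplusOneBox4

open scoped Classical in
/-- The set of outer-corner values to put in the bottom box. -/
private noncomputable def cornerSet (mu mu' : ℕ → ℕ) : Finset ℕ :=
  (Finset.range (numParts mu + 2)).filter (fun w => 1 ≤ w ∧ mu' (w - 1) = mu (w - 1) + 1)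

open scoped Classical in
/-- The canonical tableau of shape (1)⊕μ. -/
private noncomputable def canonT (mu mu' : ℕ → ℕ) : ℕ × ℕ → Finset ℕ := fun p =>
  if p = (numParts mu, 0) then cornerSet mu mu'
  else if 1 ≤ p.2 ∧ p.2 ≤ mu p.1 then {p.1 + 1} else ∅

variable {mu mu' : ℕ → ℕ}

private lemma mem_cornerSet (hmu : IsPartition mu) (hAO : AddOuterCorners mu mu') (w : ℕ) :
    w ∈ cornerSet mu mu' ↔ 1 ≤ w ∧ mu' (w - 1) = mu (w - 1) + 1 := by
  classical
  rw [cornerSet]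
  simp only [Finset.mem_filter, Finset.mem_range]
  constructor
  · tauto
  · rintro ⟨h1, h2⟩
    have hw : w < numParts mu + 2 := by
      by_contra hw
      push_neg at hw
      rcases hAO (w - 1) with h | ⟨h, h' | h'⟩
      · omega
      · omega
      · have e1 : mu (w - 1) = 0 := partition_zero hmu _ (by omega)
        have e2 : mu (w - 1 - 1) = 0 := partition_zero hmu _ (by omega)
        omega
    exact ⟨hw, h1, h2⟩

private lemma corner_lt (hmu : IsPartition mu) (hAO : AddOuterCorners mu mu') {w : ℕ}
    (hw : w ∈ cornerSet mu mu') (h2 : 2 ≤ w) : mu (w - 1) < mu (w - 2) := by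
  rw [mem_cornerSet hmu hAO] at hw
  rcases hAO (w - 1) with h | ⟨h, h' | h'⟩
  · omega
  · omega
  · have e : w - 1 - 1 = w - 2 := by omega
    rwa [e] at h'

private lemma cornerSet_pos {w : ℕ} (hw : w ∈ cornerSet mu mu') : 1 ≤ w := by
  classical
  rw [cornerSet, Finset.mem_filter] at hw
  exact hw.2.1

private lemma cornerSet_nonempty (hmu : IsPartition mu) (hAO : AddOuterCorners mu mu')
    (hne : mu' ≠ mu) : (cornerSet mu mu').Nonempty := by
  obtain ⟨v, hv⟩ := Function.ne_iff.1 hne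
  rcases hAO v with h | ⟨h, _⟩
  · exact absurd h hv
  · exact ⟨v + 1, (mem_cornerSet hmu hAO _).2 ⟨by omega, by simpa using h⟩⟩

private lemma canon_rows (mu mu' : ℕ → ℕ) :
    ∀ i c, 1 ≤ c → c ≤ mu i → canonT mu mu' (i, c) = {i + 1} := by
  intro i c h1 h2
  rw [canonT, if_neg (by simp; omega), if_pos ⟨h1, h2⟩]

private lemma canon_off (mu mu' : ℕ → ℕ) : ∀ p ∉ Dsh mu, canonT mu mu' p = ∅ := by
  intro p hp
  rw [mem_Dsh] at hp
  push_neg at hp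
  rw [canonT, if_neg hp.2, if_neg (by have := hp.1; omega)]

private lemma forward_dir (hmu : IsPartition mu) (hAO : AddOuterCorners mu mu')
    (hne : mu' ≠ mu) :
    IsSVT (Dsh mu) (canonT mu mu') ∧ IsSemistandardSVT (Dsh mu) (canonT mu mu') ∧
      svtBallot (Dsh mu) (canonT mu mu') ∧ svtContentEq (Dsh mu) (canonT mu mu') mu' := by
  classical
  have hmm : mu (numParts mu) = 0 := partition_zero hmu _ le_rfl
  have hcanonbot : canonT mu mu' (numParts mu, 0) = cornerSet mu mu' := by
    rw [canonT, if_pos rfl]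
  have hsvt : IsSVT (Dsh mu) (canonT mu mu') := by
    constructor
    · rintro ⟨a, b⟩ hp
      rw [mem_Dsh] at hp
      dsimp only at hp
      rcases hp with ⟨h1, h2⟩ | h
      · rw [canon_rows mu mu' a b h1 (by omega)]
        exact ⟨⟨a + 1, Finset.mem_singleton_self _⟩, by simp⟩
      · rw [h, hcanonbot]
        exact ⟨cornerSet_nonempty hmu hAO hne, fun v hv => cornerSet_pos hv⟩
    · exact canon_off mu mu'
  refine ⟨hsvt, ?_, ?_, ?_⟩
  · constructor
    · intro r c hc hc1
      rw [mem_Dsh] at hc hc1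
      have h1 : 1 ≤ c + 1 ∧ c + 1 < 1 + mu r := by
        rcases hc1 with h | h
        · exact h
        · simp only [Prod.mk.injEq] at h; omega
      rcases hc with h | h
      · rw [canon_rows mu mu' r c h.1 (by omega), canon_rows mu mu' r (c + 1) (by omega)
          (by omega)]
        simp
      · simp only [Prod.mk.injEq] at h
        obtain ⟨rfl, rfl⟩ := h
        omega
    · intro r c hc hc1
      rw [mem_Dsh] at hc hc1
      have h1 : 1 ≤ c ∧ c < 1 + mu (r + 1) := by
        rcases hc1 with h | h
        · exact h
        · simp only [Prod.mk.injEq] at h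
          exfalso
          rcases hc with h' | h'
          · omega
          · simp only [Prod.mk.injEq] at h'; omega
      have hmono := hmu.1 r (r + 1) (by omega)
      rw [canon_rows mu mu' r c h1.1 (by omega),
        canon_rows mu mu' (r + 1) c h1.1 (by omega)]
      simp
  · intro o ho v hv
    obtain ⟨⟨a, b⟩, x⟩ := o
    rw [occ_iff (canon_rows mu mu') (canon_off mu mu')] at ho
    dsimp only at ho
    rcases ho with ⟨hb1, hb2, rfl⟩ | ⟨hq, hx⟩
    · have ham : a < numParts mu := lt_numParts hmu (by omega)
      rcases Nat.lt_trichotomy v a with h | h | h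
      · rw [count_upper_lt (canon_rows mu mu') (canon_off mu mu') ham (by omega) (by omega),
          count_upper_lt (canon_rows mu mu') (canon_off mu mu') ham (by omega) (by omega)]
        have := hmu.1 (v - 1) v (by omega)
        simpa using this
      · subst h
        rw [count_upper_eq (canon_rows mu mu') (canon_off mu mu') ham hb1,
          count_upper_lt (canon_rows mu mu') (canon_off mu mu') ham (by omega) (by omega)]
        have := hmu.1 (v - 1) v (by omega)
        omega
      · rw [count_upper_gt (canon_rows mu mu') (canon_off mu mu') ham (by omega)]
        exact Nat.zero_le _
    · simp only [Prod.mk.injEq] at hq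
      obtain ⟨rfl, rfl⟩ := hq
      rw [hcanonbot] at hx
      rw [count_bottom hmu (canon_rows mu mu') (canon_off mu mu') (by omega),
        count_bottom hmu (canon_rows mu mu') (canon_off mu mu') hv]
      simp only [hcanonbot, Nat.add_sub_cancel]
      have hmono : mu v ≤ mu (v - 1) := hmu.1 (v - 1) v (by omega)
      by_cases hc : v + 1 ∈ cornerSet mu mu' ∧ x ≤ v + 1
      · have hlt : mu v < mu (v - 1) := corner_lt hmu hAO hc.1 (by omega)
        rw [if_pos hc]
        split_ifs <;> omega
      · rw [if_neg hc]
        split_ifs <;> omega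
  · intro v
    rw [content_count hmu (canon_rows mu mu') (canon_off mu mu'), hcanonbot]
    rcases hAO v with h | ⟨h, _⟩
    · rw [if_neg, h, Nat.add_zero]
      rw [mem_cornerSet hmu hAO]
      simp only [Nat.add_sub_cancel]
      omega
    · rw [if_pos, h]
      rw [mem_cornerSet hmu hAO]
      simp only [Nat.add_sub_cancel]
      omega

end OplusOneBox4
section OplusOneBox5

variable {mu mu' : ℕ → ℕ} {S : ℕ × ℕ → Finset ℕ}

private lemma rows_forced (hmu : IsPartition mu)
    (h1 : IsSVT (Dsh mu) S) (h2 : IsSemistandardSVT (Dsh mu) S)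
    (h3 : svtBallot (Dsh mu) S) :
    ∀ i c, 1 ≤ c → c ≤ mu i → S (i, c) = {i + 1} := by
  intro i
  induction i using Nat.strong_induction_on with
  | _ i IH =>
  have hD : ∀ c', 1 ≤ c' → c' ≤ mu i → ((i, c') : ℕ × ℕ) ∈ Dsh mu := by
    intro c' a b
    rw [mem_Dsh]
    left
    dsimp only
    omega
  intro c hc1 hc2
  have him : i < numParts mu := lt_numParts hmu (by omega)
  -- lower bound
  have hlb : ∀ c', 1 ≤ c' → c' ≤ mu i → ∀ x ∈ S (i, c'), i + 1 ≤ x := by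
    intro c' hc'1 hc'2 x hx
    rcases Nat.eq_zero_or_pos i with rfl | hi
    · exact (h1.1 _ (hD c' hc'1 hc'2)).2 x hx
    · obtain ⟨j, rfl⟩ : ∃ j, i = j + 1 := ⟨i - 1, by omega⟩
      have hcj : c' ≤ mu j := le_trans hc'2 (hmu.1 j (j + 1) (by omega))
      have hup : S (j, c') = {j + 1} := IH j (by omega) c' hc'1 hcj
      have hDj : ((j, c') : ℕ × ℕ) ∈ Dsh mu := by
        rw [mem_Dsh]
        left
        dsimp only
        omega
      have := h2.2 j c' hDj (hD c' hc'1 hc'2) (j + 1) (by rw [hup]; simp) x hx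
      omega
  -- upper bound at the rightmost box
  have hub : ∀ x ∈ S (i, mu i), x ≤ i + 1 := by
    by_contra h
    push_neg at h
    obtain ⟨x, hx, hxgt⟩ := h
    have hoD : (((i, mu i), x) : (ℕ × ℕ) × ℕ) ∈ svtOcc (Dsh mu) S :=
      ⟨hD (mu i) (by omega) le_rfl, hx⟩
    have hball := h3 _ hoD (x - 1) (by omega)
    have hx1 : x - 1 + 1 = x := by omega
    rw [hx1] at hball
    have hc0 : svtCount (Dsh mu) S ((i, mu i), x) (x - 1) = 0 := by
      rw [svtCount]
      have he : {q ∈ svtOcc (Dsh mu) S | readLE q ((i, mu i), x) ∧ q.2 = x - 1} = ∅ := by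
        ext ⟨⟨a, b⟩, y⟩
        simp only [Set.mem_setOf_eq, svtOcc, mem_Dsh, readLE, Set.mem_empty_iff_false,
          iff_false, not_and, Prod.mk.injEq]
        rintro ⟨ha | ha, hy⟩ hle rfl
        · rcases hle with hle | ⟨rfl, hle⟩
          · have : S (a, b) = {a + 1} := IH a hle b ha.1 (by omega)
            rw [this] at hy
            simp only [Finset.mem_singleton] at hy
            have hmono := hmu.1 a i (by omega)
            omega
          · omega
        · obtain ⟨rfl, rfl⟩ := ha
          rcases hle with hle | ⟨rfl, hle⟩ <;> omega
      rw [he, Set.ncard_empty]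
    have hcx : 1 ≤ svtCount (Dsh mu) S ((i, mu i), x) x := by
      rw [svtCount]
      have hfin : {q ∈ svtOcc (Dsh mu) S | readLE q ((i, mu i), x) ∧ q.2 = x}.Finite :=
        (occ_finite hmu h1.2).subset (fun q h => h.1)
      refine (Set.ncard_pos hfin).2 ⟨((i, mu i), x), hoD, ?_, rfl⟩
      exact Or.inr ⟨rfl, Or.inr ⟨rfl, le_rfl⟩⟩
    omega
  -- chain from any box to the rightmost one
  have hchain : ∀ k c', 1 ≤ c' → c' + k = mu i → ∀ x ∈ S (i, c'), x ≤ i + 1 := by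
    intro k
    induction k with
    | zero => intro c' h1' h2' x hx; exact hub x (by rwa [← h2', Nat.add_zero])
    | succ n IHk =>
      intro c' h1' h2' x hx
      have hnext : ((i, c' + 1) : ℕ × ℕ) ∈ Dsh mu := hD (c' + 1) (by omega) (by omega)
      obtain ⟨y, hy⟩ := (h1.1 _ hnext).1
      have hxy := h2.1 i c' (hD c' h1' (by omega)) hnext x hx y hy
      have := IHk (c' + 1) (by omega) (by omega) y hy
      omega
  -- conclude
  rw [Finset.eq_singleton_iff_unique_mem]
  obtain ⟨y, hy⟩ := (h1.1 _ (hD c hc1 hc2)).1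
  have hyeq : y = i + 1 :=
    le_antisymm (hchain (mu i - c) c hc1 (by omega) y hy) (hlb c hc1 hc2 y hy)
  exact ⟨hyeq ▸ hy, fun b hb =>
    le_antisymm (hchain (mu i - c) c hc1 (by omega) b hb) (hlb c hc1 hc2 b hb)⟩

private lemma unique_dir (hmu : IsPartition mu)
    (h1 : IsSVT (Dsh mu) S) (h2 : IsSemistandardSVT (Dsh mu) S)
    (h3 : svtBallot (Dsh mu) S) (h4 : svtContentEq (Dsh mu) S mu') :
    AddOuterCorners mu mu' ∧ mu' ≠ mu ∧ S = canonT mu mu' := by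
  classical
  have hrows := rows_forced hmu h1 h2 h3
  have hS0 := h1.2
  have hbD : ((numParts mu, 0) : ℕ × ℕ) ∈ Dsh mu := (mem_Dsh _ _).2 (Or.inr rfl)
  have hFpos : ∀ x ∈ S (numParts mu, 0), 1 ≤ x := (h1.1 _ hbD).2
  have hFne : (S (numParts mu, 0)).Nonempty := (h1.1 _ hbD).1
  have hcont : ∀ v, mu' v = mu v + (if v + 1 ∈ S (numParts mu, 0) then 1 else 0) := by
    intro v
    rw [← h4 v, content_count hmu hrows hS0]
  have hcorner : ∀ v, 1 ≤ v → v + 1 ∈ S (numParts mu, 0) → mu v < mu (v - 1) := by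
    intro v hv hvF
    have ho : (((numParts mu, 0), v + 1) : (ℕ × ℕ) × ℕ) ∈ svtOcc (Dsh mu) S := ⟨hbD, hvF⟩
    have hball := h3 _ ho v hv
    rw [count_bottom hmu hrows hS0 (by omega), count_bottom hmu hrows hS0 hv,
      if_pos ⟨hvF, le_rfl⟩, if_neg (by rintro ⟨-, h⟩; omega)] at hball
    simp only [Nat.add_sub_cancel] at hball
    omega
  have hAO : AddOuterCorners mu mu' := by
    intro v
    have := hcont v
    by_cases hc : v + 1 ∈ S (numParts mu, 0)
    · rw [if_pos hc] at this
      rcases Nat.eq_zero_or_pos v with rfl | hv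
      · exact Or.inr ⟨this, Or.inl rfl⟩
      · exact Or.inr ⟨this, Or.inr (hcorner v hv hc)⟩
    · rw [if_neg hc] at this
      exact Or.inl (by omega)
  have hne : mu' ≠ mu := by
    obtain ⟨x, hx⟩ := hFne
    have hx1 := hFpos x hx
    have := hcont (x - 1)
    have hxe : x - 1 + 1 = x := by omega
    rw [hxe, if_pos hx] at this
    intro h
    rw [h] at this
    omega
  refine ⟨hAO, hne, ?_⟩
  funext p
  obtain ⟨a, b⟩ := p
  by_cases hp : ((a, b) : ℕ × ℕ) = (numParts mu, 0)
  · rw [hp, canonT, if_pos rfl]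
    ext x
    rw [mem_cornerSet hmu hAO]
    constructor
    · intro hx
      have hx1 := hFpos x hx
      have := hcont (x - 1)
      have hxe : x - 1 + 1 = x := by omega
      rw [hxe, if_pos hx] at this
      exact ⟨hx1, this⟩
    · rintro ⟨hx1, hx2⟩
      have := hcont (x - 1)
      have hxe : x - 1 + 1 = x := by omega
      rw [hxe] at this
      by_contra hnm
      rw [if_neg hnm] at this
      omega
  · by_cases hq : 1 ≤ b ∧ b ≤ mu a
    · rw [canon_rows mu mu' a b hq.1 hq.2]
      exact hrows a b hq.1 hq.2
    · have hnd : ((a, b) : ℕ × ℕ) ∉ Dsh mu := by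
        rw [mem_Dsh]
        dsimp only
        rintro (h | h)
        · exact hq ⟨h.1, by omega⟩
        · exact hp h
      rw [hS0 _ hnd, canon_off mu mu' _ hnd]

end OplusOneBox5
/-- The number of semistandard ballot set-valued tableaux of
shape (1)⊕μ and content μ' is 1 if μ' is obtained from μ by adding a nonempty
set of outer corners, and 0 otherwise.  (Here (1)⊕μ is `oplusShape` with
lower-left part the single-box partition (1) and upper-right part μ.) -/
theorem oplus_one_box_count (mu mu' : ℕ → ℕ)
    (hmu : IsPartition mu) (hmu' : IsPartition mu') :
    ((AddOuterCorners mu mu' ∧ mu' ≠ mu) →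
      {S : ℕ × ℕ → Finset ℕ |
        IsSVT (oplusShape (fun i => if i = 0 then 1 else 0) mu) S ∧
        IsSemistandardSVT (oplusShape (fun i => if i = 0 then 1 else 0) mu) S ∧
        svtBallot (oplusShape (fun i => if i = 0 then 1 else 0) mu) S ∧
        svtContentEq (oplusShape (fun i => if i = 0 then 1 else 0) mu) S mu'}.ncard = 1) ∧
    (¬(AddOuterCorners mu mu' ∧ mu' ≠ mu) →
      {S : ℕ × ℕ → Finset ℕ |
        IsSVT (oplusShape (fun i => if i = 0 then 1 else 0) mu) S ∧
        IsSemistandardSVT (oplusShape (fun i => if i = 0 then 1 else 0) mu) S ∧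
        svtBallot (oplusShape (fun i => if i = 0 then 1 else 0) mu) S ∧
        svtContentEq (oplusShape (fun i => if i = 0 then 1 else 0) mu) S mu'}.ncard = 0) := by
  constructor
  · rintro ⟨hAO, hne⟩
    have hset : {S : ℕ × ℕ → Finset ℕ | IsSVT (Dsh mu) S ∧ IsSemistandardSVT (Dsh mu) S ∧
        svtBallot (Dsh mu) S ∧ svtContentEq (Dsh mu) S mu'} = {canonT mu mu'} := by
      ext S
      simp only [Set.mem_setOf_eq, Set.mem_singleton_iff]
      constructor
      · rintro ⟨a, b, c, d⟩
        exact (unique_dir hmu a b c d).2.2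
      · rintro rfl
        obtain ⟨a, b, c, d⟩ := forward_dir hmu hAO hne
        exact ⟨a, b, c, d⟩
    show ({S : ℕ × ℕ → Finset ℕ | IsSVT (Dsh mu) S ∧ IsSemistandardSVT (Dsh mu) S ∧
        svtBallot (Dsh mu) S ∧ svtContentEq (Dsh mu) S mu'}).ncard = 1
    rw [hset, Set.ncard_singleton]
  · intro h
    have hset : {S : ℕ × ℕ → Finset ℕ | IsSVT (Dsh mu) S ∧ IsSemistandardSVT (Dsh mu) S ∧
        svtBallot (Dsh mu) S ∧ svtContentEq (Dsh mu) S mu'} = (∅ : Set _) := by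
      ext S
      simp only [Set.mem_setOf_eq, Set.mem_empty_iff_false, iff_false]
      rintro ⟨a, b, c, d⟩
      obtain ⟨hAO, hne, -⟩ := unique_dir hmu a b c d
      exact h ⟨hAO, hne⟩
    show ({S : ℕ × ℕ → Finset ℕ | IsSVT (Dsh mu) S ∧ IsSemistandardSVT (Dsh mu) S ∧
        svtBallot (Dsh mu) S ∧ svtContentEq (Dsh mu) S mu'}).ncard = 0
    rw [hset, Set.ncard_empty]
end
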